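/- arXiv:1401.7315 — 10 statements merged into one kernel-verified Lean document; each statement's English description precedes it below -/
import Mathlib

section
/- Let X and Y be metric spaces, x₀ ∈ X, f : X → Y, and let α ≥ 1, λ ≥ 1, c ≥ 0, R > 0. Assume: (i) there is a finite subset S of the closed ball B(x₀,R) in X whose points are pairwise at distance ≥ 2(c+λ+1) and whose cardinality is at least exp(R − 2(c+λ+1)); (ii) for every y ∈ Y and every ρ ≥ 1, every subset of the closed ball B(y,ρ) in Y whose points are pairwise at distance ≥ 1 is finite of cardinality at most ρ^α; (iii) for all x, x' ∈ B(x₀,R), dist(f x, f x') ≤ λ·dist(x,x') + c and dist(x,x') ≤ λ·dist(f x, f x') + c. Then R ≤ 2c + 2λ + 2 + α·log(λR + c + 1). -/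
/-!
A $(λ,c)$-quasi-isometric embedding sends a $2(c+λ+1)$-separated set $S$ in $B(x_0,R)$
injectively onto a $1$-separated set in $B(f x_0, λR + c + 1)$. The packing bound in $Y$
then gives $e^{R - 2(c+λ+1)} ≤ |S| ≤ (λR + c + 1)^α$; take logarithms.
-/

open Metric Real

theorem Set.Pairwise.injOn_of_one_le_dist_map {X Y : Type*} [PseudoMetricSpace Y] {f : X → Y}
    {S : Set X} (hS : S.Pairwise fun x y => 1 ≤ dist (f x) (f y)) : S.InjOn f := by
  intro x hx y hy hxy
  by_contra hne
  have h : 1 ≤ dist (f x) (f y) := hS hx hy hne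
  rw [hxy, dist_self] at h
  linarith

section QuasiIsometric

variable {X Y : Type*} [PseudoMetricSpace X] [PseudoMetricSpace Y]

theorem Set.Pairwise.one_le_dist_map_of_le_mul_dist_add {f : X → Y} {S : Set X} {lam c δ : ℝ}
    (hlam : 0 ≤ lam) (hδ : lam + c < δ) (hS : S.Pairwise fun x y => δ ≤ dist x y)
    (hlow : ∀ x ∈ S, ∀ y ∈ S, dist x y ≤ lam * dist (f x) (f y) + c) :
    S.Pairwise fun x y => 1 ≤ dist (f x) (f y) := by
  intro x hx y hy hne
  by_contra! hlt
  have : lam * dist (f x) (f y) ≤ lam := mul_le_of_le_one_right hlam hlt.le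
  linarith [hS hx hy hne, hlow x hx y hy]

theorem image_subset_closedBall_of_dist_le_mul_dist_add {f : X → Y} {s : Set X} {x₀ : X}
    {lam c R : ℝ} (hlam : 0 ≤ lam) (hs : s ⊆ closedBall x₀ R)
    (hup : ∀ x ∈ s, dist (f x) (f x₀) ≤ lam * dist x x₀ + c) :
    f '' s ⊆ closedBall (f x₀) (lam * R + c) := by
  rintro _ ⟨x, hx, rfl⟩
  have : lam * dist x x₀ ≤ lam * R := mul_le_mul_of_nonneg_left (hs hx) hlam
  exact mem_closedBall.2 (by linarith [hup x hx])

end QuasiIsometric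

theorem le_mul_log_of_exp_le_rpow {a ρ α : ℝ} (hρ : 0 < ρ) (h : exp a ≤ ρ ^ α) :
    a ≤ α * log ρ := by
  simpa only [log_exp, log_rpow hρ] using log_le_log (exp_pos a) h

theorem stmt_0_general
    {X Y : Type*} [MetricSpace X] [MetricSpace Y]
    (x₀ : X) (f : X → Y) (α lam c R : ℝ)
    (hlam : 1 ≤ lam) (hc : 0 ≤ c) (hR : 0 < R)
    -- (i) exponential growth of X: a large separated set in B(x₀,R)
    (hexp : ∃ S : Finset X,
      (∀ x ∈ S, x ∈ closedBall x₀ R) ∧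
      (∀ x ∈ S, ∀ y ∈ S, x ≠ y → 2 * (c + lam + 1) ≤ dist x y) ∧
      Real.exp (R - 2 * (c + lam + 1)) ≤ (S.card : ℝ))
    -- (ii) polynomial growth of Y: packing bounds
    (hpoly : ∀ (y : Y) (ρ : ℝ), 1 ≤ ρ → ∀ T : Set Y,
      T ⊆ closedBall y ρ → (T.Pairwise fun a b => 1 ≤ dist a b) →
      T.Finite ∧ (T.ncard : ℝ) ≤ ρ ^ α)
    -- (iii) f is a (λ,c)-quasi-isometric embedding on B(x₀,R)
    (hqi : ∀ x ∈ closedBall x₀ R, ∀ x' ∈ closedBall x₀ R,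
      dist (f x) (f x') ≤ lam * dist x x' + c ∧
      dist x x' ≤ lam * dist (f x) (f x') + c) :
    R ≤ 2 * c + 2 * lam + 2 + α * Real.log (lam * R + c + 1) := by
  obtain ⟨S, hS_ball, hS_sep, hS_card⟩ := hexp
  replace hS_ball : (S : Set X) ⊆ closedBall x₀ R := hS_ball
  have hx₀ : x₀ ∈ closedBall x₀ R := mem_closedBall_self hR.le
  have hsep : (S : Set X).Pairwise fun x y => 1 ≤ dist (f x) (f y) :=
    Set.Pairwise.one_le_dist_map_of_le_mul_dist_add (δ := 2 * (c + lam + 1)) (by linarith)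
      (by linarith) (fun x hx y hy => hS_sep x hx y hy)
      (fun x hx y hy => (hqi x (hS_ball hx) y (hS_ball hy)).2)
  have himage : f '' S ⊆ closedBall (f x₀) (lam * R + c + 1) :=
    (image_subset_closedBall_of_dist_le_mul_dist_add (by linarith) hS_ball
      fun x hx => (hqi x (hS_ball hx) x₀ hx₀).1).trans (closedBall_subset_closedBall (by linarith))
  have hcard : (S.card : ℝ) ≤ (lam * R + c + 1) ^ α := by
    rw [← Set.ncard_coe_finset, ← hsep.injOn_of_one_le_dist_map.ncard_image]
    exact (hpoly (f x₀) _ (by nlinarith) _ himage hsep.image).2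
  linarith [le_mul_log_of_exp_le_rpow (by nlinarith) (hS_card.trans hcard)]

theorem stmt_0
    {X Y : Type*} [MetricSpace X] [MetricSpace Y]
    (x₀ : X) (f : X → Y) (α lam c R : ℝ)
    (hα : 1 ≤ α) (hlam : 1 ≤ lam) (hc : 0 ≤ c) (hR : 0 < R)
    -- (i) exponential growth of X: a large separated set in B(x₀,R)
    (hexp : ∃ S : Finset X,
      (∀ x ∈ S, x ∈ closedBall x₀ R) ∧
      (∀ x ∈ S, ∀ y ∈ S, x ≠ y → 2 * (c + lam + 1) ≤ dist x y) ∧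
      Real.exp (R - 2 * (c + lam + 1)) ≤ (S.card : ℝ))
    -- (ii) polynomial growth of Y: packing bounds
    (hpoly : ∀ (y : Y) (ρ : ℝ), 1 ≤ ρ → ∀ T : Set Y,
      T ⊆ closedBall y ρ → (T.Pairwise fun a b => 1 ≤ dist a b) →
      T.Finite ∧ (T.ncard : ℝ) ≤ ρ ^ α)
    -- (iii) f is a (λ,c)-quasi-isometric embedding on B(x₀,R)
    (hqi : ∀ x ∈ closedBall x₀ R, ∀ x' ∈ closedBall x₀ R,
      dist (f x) (f x') ≤ lam * dist x x' + c ∧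
      dist x x' ≤ lam * dist (f x) (f x') + c) :
    R ≤ 2 * c + 2 * lam + 2 + α * Real.log (lam * R + c + 1) :=
  stmt_0_general x₀ f α lam c R hlam hc hR hexp hpoly hqi
end

section
/- Let X be a geodesic metric space such that for all points x, y ∈ X and all real numbers r > 0 and 0 < r' ≤ r/2, the set B(x,r) ∖ B(y,r') (difference of open balls) is nonempty and connected. Let Y be a geodesic metric space satisfying the four-point condition with δ = 0 (an ℝ-tree). Let x₀ ∈ X, R > 0, λ₁ ≥ 1, λ₂ ≥ 1, c₁ > 0, c₂ ≥ 0, and let f : B(x₀,R) → Y be a (λ₁,λ₂,c₁,c₂)-quasi-isometric embedding. Then R ≤ 12·λ₂·c₁ + 4·c₂. -/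
/-!
Fix `r < R` and a geodesic segment `γ` of length `r` from `x₀`, with midpoint `m`. The two halves
of `γ` and the annulus `B(x₀, R) ∖ B(m, r/2)` are connected sets joining `x₀`, `m`, `γ r` in
pairs. In an ℝ-tree the images of these three points span a tripod with centre `w`, and the
coarsely continuous image of a connected set joining two of them passes within `c₁/2` of `w`:
otherwise "`w` does not lie between `F a` and `F b`" would be a relation that holds locally and
is transitive by the four-point condition, hence would hold between the two ends. This yields `α`
in the annulus, `p` in the first half and `q` in the second, pairwise close in `X` by the lower
quasi-isometry bound. As `r/2 ≤ d(α, m) ≤ d(α, p) + d(p, m) ≤ d(α, p) + d(p, q)`, this gives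
`r ≤ 4 (λ₂ c₁ + c₂)`, and letting `r → R` gives `R ≤ 4 (λ₂ c₁ + c₂)`.
-/

open Metric Set

/-- A metric space is geodesic: any two points are joined by an isometric image
of the interval `[0, dist x y]`. -/
def IsGeodesicMetricSpace (X : Type*) [MetricSpace X] : Prop :=
  ∀ x y : X, ∃ γ : ℝ → X, γ 0 = x ∧ γ (dist x y) = y ∧
    ∀ s ∈ Icc (0 : ℝ) (dist x y), ∀ t ∈ Icc (0 : ℝ) (dist x y),
      dist (γ s) (γ t) = |s - t|

open Filter Topology

section IsometryOn

variable {α β : Type*} [PseudoMetricSpace α] [PseudoMetricSpace β]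

def IsometryOn (f : α → β) (s : Set α) : Prop :=
  ∀ a ∈ s, ∀ b ∈ s, dist (f a) (f b) = dist a b

theorem IsometryOn.continuousOn {f : α → β} {s : Set α} (hf : IsometryOn f s) :
    ContinuousOn f s :=
  (LipschitzOnWith.of_dist_le_mul fun a ha b hb => by
    rw [hf a ha b hb, NNReal.coe_one, one_mul]).continuousOn

end IsometryOn

theorem IsGeodesicMetricSpace.exists_isometryOn_Icc {X : Type*} [MetricSpace X]
    (hX : IsGeodesicMetricSpace X) {x z : X} {r : ℝ} (hr : r ≤ dist x z) :
    ∃ γ : ℝ → X, γ 0 = x ∧ IsometryOn γ (Icc 0 r) := by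
  obtain ⟨γ, hγ0, -, hγ⟩ := hX x z
  refine ⟨γ, hγ0, fun s hs t ht => ?_⟩
  rw [hγ s ⟨hs.1, hs.2.trans hr⟩ t ⟨ht.1, ht.2.trans hr⟩, Real.dist_eq]

theorem IsometryOn.dist_le_dist_add_dist {X : Type*} [PseudoMetricSpace X] {γ : ℝ → X}
    {I : Set ℝ} (hγ : IsometryOn γ I) {s t u : ℝ} (hs : s ∈ I) (ht : t ∈ I) (hu : u ∈ I)
    (hst : s ≤ t) (htu : t ≤ u) (a : X) :
    dist a (γ t) ≤ dist a (γ s) + dist (γ s) (γ u) := by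
  have hmid : dist (γ s) (γ t) ≤ dist (γ s) (γ u) := by
    rw [hγ s hs t ht, hγ s hs u hu, Real.dist_eq, Real.dist_eq,
      abs_of_nonpos (by linarith), abs_of_nonpos (by linarith)]
    linarith
  linarith [dist_triangle a (γ s) (γ t)]

theorem eventually_dist_lt_of_dist_le_mul_add {X Y : Type*} [PseudoMetricSpace X]
    [PseudoMetricSpace Y] {F : X → Y} {s : Set X} {K c : ℝ}
    (hF : ∀ a ∈ s, ∀ b ∈ s, dist (F a) (F b) ≤ K * dist a b + c) :
    ∀ a ∈ s, ∀ c' > c, ∀ᶠ b in 𝓝[s] a, dist (F a) (F b) < c' := by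
  intro a ha c' hc'
  have hlim : Tendsto (fun b => K * dist a b + c) (𝓝[s] a) (𝓝 c) := by
    have h : Tendsto (fun b => K * dist a b + c) (𝓝 a) (𝓝 (K * dist a a + c)) :=
      (by fun_prop : Continuous fun b => K * dist a b + c).tendsto a
    simpa using h.mono_left nhdsWithin_le_nhds
  filter_upwards [hlim.eventually (gt_mem_nhds hc'), self_mem_nhdsWithin] with b hb hbs
  exact (hF a ha b hbs).trans_lt hb

def IsZeroHyperbolic (Y : Type*) [PseudoMetricSpace Y] : Prop :=
  ∀ p q r s : Y, dist p q + dist r s ≤ max (dist p r + dist q s) (dist p s + dist q r)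

namespace IsZeroHyperbolic

theorem dist_lt_add_trans {Y : Type*} [PseudoMetricSpace Y] (hY : IsZeroHyperbolic Y)
    {a b c w : Y} (hab : dist a b < dist a w + dist w b) (hbc : dist b c < dist b w + dist w c) :
    dist a c < dist a w + dist w c := by
  have h := hY a c b w
  have hmax : max (dist a b + dist c w) (dist a w + dist c b) <
      dist a w + dist b w + dist w c :=
    max_lt (by linarith [dist_comm c w, dist_comm w b])
      (by linarith [dist_comm c b, dist_comm w b])
  linarith [dist_comm b w]

theorem exists_dist_le_of_isPreconnected {X Y : Type*} [TopologicalSpace X]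
    [PseudoMetricSpace Y] (hY : IsZeroHyperbolic Y) {F : X → Y} {s : Set X} {c : ℝ}
    (hs : IsPreconnected s) (hF : ∀ a ∈ s, ∀ c' > c, ∀ᶠ b in 𝓝[s] a, dist (F a) (F b) < c')
    {u v : X} (hu : u ∈ s) (hv : v ∈ s) {w : Y}
    (hw : dist (F u) w + dist w (F v) ≤ dist (F u) (F v)) :
    ∃ a ∈ s, dist (F a) w ≤ c / 2 := by
  by_contra! hfar
  have hlocal : ∀ a ∈ s, ∀ᶠ b in 𝓝[s] a, dist (F a) (F b) < dist (F a) w + dist w (F b) := by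
    intro a ha
    filter_upwards [hF a ha (dist (F a) w + c / 2) (by linarith [hfar a ha]),
      self_mem_nhdsWithin] with b hab hb
    linarith [hfar b hb, dist_comm w (F b)]
  have hsymm : ∀ a b : X, dist (F a) (F b) < dist (F a) w + dist w (F b) →
      dist (F b) (F a) < dist (F b) w + dist w (F a) := fun a b h => by
    linarith [dist_comm (F a) (F b), dist_comm (F a) w, dist_comm (F b) w]
  have huv : dist (F u) (F v) < dist (F u) w + dist w (F v) :=
    hs.induction₂ _ hlocal (fun _ _ _ _ _ _ => hY.dist_lt_add_trans)
      (fun a b _ _ => hsymm a b) hu hv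
  exact huv.not_ge hw

theorem exists_tripod_center {Y : Type*} [MetricSpace Y]
    (hY : IsZeroHyperbolic Y) (hYgeo : IsGeodesicMetricSpace Y) (a b c : Y) :
    ∃ w, dist a w + dist w b ≤ dist a b ∧ dist b w + dist w c ≤ dist b c ∧
      dist a w + dist w c ≤ dist a c := by
  obtain ⟨σ, hσ0, hσc, hσ⟩ := hYgeo a c
  -- `w` is the point of `[a, c]` at distance `(b|c)_a` from `a`
  set t := (dist a b + dist a c - dist b c) / 2 with ht
  have ht0 : 0 ≤ t := by linarith [dist_triangle_left b c a]
  have htc : t ≤ dist a c := by linarith [dist_triangle a c b, dist_comm b c]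
  refine ⟨σ t, ?_⟩
  have haw : dist a (σ t) = t := by
    rw [← hσ0, hσ 0 ⟨le_rfl, dist_nonneg⟩ t ⟨ht0, htc⟩, zero_sub, abs_neg, abs_of_nonneg ht0]
  have hwc : dist (σ t) c = dist a c - t := by
    conv_lhs => rw [← hσc]
    rw [hσ t ⟨ht0, htc⟩ _ ⟨dist_nonneg, le_rfl⟩, abs_of_nonpos (by linarith)]
    ring
  have hbw : dist b (σ t) ≤ (dist a b + dist b c - dist a c) / 2 := by
    have h := hY b (σ t) a c
    rcases le_max_iff.mp h with h | h <;>
      linarith [dist_comm a b, dist_comm (σ t) a, dist_comm (σ t) c]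
  refine ⟨?_, ?_, ?_⟩ <;> linarith [dist_comm (σ t) b, dist_comm b (σ t)]

theorem exists_dist_le_of_three_isPreconnected {X Y : Type*}
    [TopologicalSpace X] [MetricSpace Y] (hY : IsZeroHyperbolic Y)
    (hYgeo : IsGeodesicMetricSpace Y) {F : X → Y} {D s₁ s₂ s₃ : Set X} {c : ℝ}
    (hF : ∀ a ∈ D, ∀ c' > c, ∀ᶠ b in 𝓝[D] a, dist (F a) (F b) < c')
    (hs₁ : IsPreconnected s₁) (hs₂ : IsPreconnected s₂) (hs₃ : IsPreconnected s₃)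
    (hs₁D : s₁ ⊆ D) (hs₂D : s₂ ⊆ D) (hs₃D : s₃ ⊆ D) {x y z : X}
    (hx₁ : x ∈ s₁) (hy₁ : y ∈ s₁) (hy₂ : y ∈ s₂) (hz₂ : z ∈ s₂) (hx₃ : x ∈ s₃) (hz₃ : z ∈ s₃) :
    ∃ a₁ ∈ s₁, ∃ a₂ ∈ s₂, ∃ a₃ ∈ s₃, dist (F a₃) (F a₁) ≤ c ∧ dist (F a₁) (F a₂) ≤ c := by
  have hFOn : ∀ s ⊆ D, ∀ a ∈ s, ∀ c' > c, ∀ᶠ b in 𝓝[s] a, dist (F a) (F b) < c' :=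
    fun s hs a ha c' hc' => (hF a (hs ha) c' hc').filter_mono (nhdsWithin_mono a hs)
  obtain ⟨w, hw₁, hw₂, hw₃⟩ := hY.exists_tripod_center hYgeo (F x) (F y) (F z)
  obtain ⟨a₁, ha₁, hwa₁⟩ := hY.exists_dist_le_of_isPreconnected hs₁ (hFOn s₁ hs₁D) hx₁ hy₁ hw₁
  obtain ⟨a₂, ha₂, hwa₂⟩ := hY.exists_dist_le_of_isPreconnected hs₂ (hFOn s₂ hs₂D) hy₂ hz₂ hw₂
  obtain ⟨a₃, ha₃, hwa₃⟩ := hY.exists_dist_le_of_isPreconnected hs₃ (hFOn s₃ hs₃D) hx₃ hz₃ hw₃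
  exact ⟨a₁, ha₁, a₂, ha₂, a₃, ha₃, by linarith [dist_triangle_right (F a₃) (F a₁) w],
    by linarith [dist_triangle_right (F a₁) (F a₂) w]⟩

theorem le_of_isometryOn_Icc {X Y : Type*} [MetricSpace X] [MetricSpace Y]
    (hXconn : ∀ (x y : X) (r r' : ℝ), 0 < r → 0 < r' → r' ≤ r / 2 →
      IsConnected (ball x r \ ball y r'))
    (hY : IsZeroHyperbolic Y) (hYgeo : IsGeodesicMetricSpace Y) {x₀ : X} {R r c lam c₂ : ℝ}
    (hr : 0 < r) (hrR : r < R) {γ : ℝ → X} (hγ0 : γ 0 = x₀) (hγ : IsometryOn γ (Icc 0 r))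
    {F : X → Y}
    (hup : ∀ a ∈ closedBall x₀ R, ∀ c' > c, ∀ᶠ b in 𝓝[closedBall x₀ R] a, dist (F a) (F b) < c')
    (hlow : ∀ a ∈ closedBall x₀ R, ∀ b ∈ closedBall x₀ R,
      dist a b ≤ lam * dist (F a) (F b) + c₂)
    (hlam : 0 ≤ lam) :
    r ≤ 4 * (lam * c + c₂) := by
  have hdist₀ : ∀ t ∈ Icc 0 r, dist (γ t) x₀ = t := fun t ht => by
    rw [← hγ0, hγ t ht 0 ⟨le_rfl, hr.le⟩, Real.dist_eq, sub_zero, abs_of_nonneg ht.1]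
  have hγD : ∀ t ∈ Icc 0 r, γ t ∈ closedBall x₀ R := fun t ht =>
    mem_closedBall.2 ((hdist₀ t ht).trans_le (ht.2.trans hrR.le))
  have hsegD : ∀ {a b}, Icc a b ⊆ Icc 0 r → γ '' Icc a b ⊆ closedBall x₀ R := by
    rintro a b hab _ ⟨t, ht, rfl⟩
    exact hγD t (hab ht)
  have hseg : ∀ {a b}, Icc a b ⊆ Icc 0 r → IsPreconnected (γ '' Icc a b) := fun hab =>
    isPreconnected_Icc.image γ (hγ.continuousOn.mono hab)
  have hm : r / 2 ∈ Icc 0 r := ⟨by linarith, by linarith⟩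
  have hz : r ∈ Icc 0 r := ⟨hr.le, le_rfl⟩
  have hI₁ : Icc 0 (r / 2) ⊆ Icc 0 r := Icc_subset_Icc le_rfl hm.2
  have hI₂ : Icc (r / 2) r ⊆ Icc 0 r := Icc_subset_Icc hm.1 le_rfl
  set A := ball x₀ R \ ball (γ (r / 2)) (r / 2)
  have hAD : A ⊆ closedBall x₀ R := sdiff_subset.trans ball_subset_closedBall
  have hx₀A : x₀ ∈ A := ⟨mem_ball_self (hr.trans hrR), by
    rw [mem_ball, dist_comm, hdist₀ _ hm]
    exact lt_irrefl _⟩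
  have hzA : γ r ∈ A := ⟨mem_ball.2 ((hdist₀ r hz).trans_lt hrR), by
    rw [mem_ball, hγ r hz _ hm, Real.dist_eq, abs_of_nonneg (by linarith)]
    linarith⟩
  obtain ⟨_, ⟨s, hs, rfl⟩, _, ⟨u, hu, rfl⟩, α, hαA, hαp, hpq⟩ :=
    hY.exists_dist_le_of_three_isPreconnected hYgeo hup (hseg hI₁) (hseg hI₂)
      (hXconn x₀ _ R (r / 2) (hr.trans hrR) (by linarith) (by linarith)).isPreconnected
      (hsegD hI₁) (hsegD hI₂) hAD ⟨0, ⟨le_rfl, hm.1⟩, hγ0⟩ (mem_image_of_mem γ ⟨hm.1, le_rfl⟩)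
      (mem_image_of_mem γ ⟨le_rfl, hm.2⟩) (mem_image_of_mem γ ⟨hm.2, le_rfl⟩) hx₀A hzA
  have hαm : r / 2 ≤ dist α (γ (r / 2)) := not_lt.1 hαA.2
  have hmid := hγ.dist_le_dist_add_dist (hI₁ hs) hm (hI₂ hu) hs.2 hu.1 α
  linarith [hlow α (hAD hαA) _ (hγD s (hI₁ hs)), mul_le_mul_of_nonneg_left hαp hlam,
    hlow _ (hγD s (hI₁ hs)) _ (hγD u (hI₂ hu)), mul_le_mul_of_nonneg_left hpq hlam]

end IsZeroHyperbolic

theorem stmt_1_general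
    {X Y : Type*} [MetricSpace X] [MetricSpace Y]
    (hXgeo : IsGeodesicMetricSpace X)
    (hXconn : ∀ (x y : X) (r r' : ℝ), 0 < r → 0 < r' → r' ≤ r / 2 →
      IsConnected (ball x r \ ball y r'))
    (hYgeo : IsGeodesicMetricSpace Y)
    (hYtree : ∀ p q r s : Y,
      dist p q + dist r s ≤ max (dist p r + dist q s) (dist p s + dist q r))
    (x₀ : X) (R lam₁ lam₂ c₁ c₂ : ℝ)
    (hR : 0 < R) (hlam₂ : 1 ≤ lam₂) (hc₁ : 0 < c₁)
    (f : closedBall x₀ R → Y)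
    (hqi : ∀ x x' : closedBall x₀ R,
      (dist (x : X) (x' : X) - c₂) / lam₂ ≤ dist (f x) (f x') ∧
      dist (f x) (f x') ≤ lam₁ * dist (x : X) (x' : X) + c₁) :
    R ≤ 12 * lam₂ * c₁ + 4 * c₂ := by
  classical
  obtain ⟨F, hF⟩ : ∃ F : X → Y, ∀ x (hx : x ∈ closedBall x₀ R), F x = f ⟨x, hx⟩ :=
    ⟨fun x => if hx : x ∈ closedBall x₀ R then f ⟨x, hx⟩ else f ⟨x₀, mem_closedBall_self hR.le⟩,
      fun x hx => dif_pos hx⟩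
  have hlow : ∀ a ∈ closedBall x₀ R, ∀ b ∈ closedBall x₀ R,
      dist a b ≤ lam₂ * dist (F a) (F b) + c₂ := fun a ha b hb => by
    have h := (hqi ⟨a, ha⟩ ⟨b, hb⟩).1
    rw [div_le_iff₀ (by linarith), ← hF a ha, ← hF b hb] at h
    linarith
  have hup := eventually_dist_lt_of_dist_le_mul_add (F := F) fun a ha b hb => by
    rw [hF a ha, hF b hb]
    exact (hqi ⟨a, ha⟩ ⟨b, hb⟩).2
  obtain ⟨z, -, hz⟩ := (hXconn x₀ x₀ (2 * R) R (by linarith) hR (by linarith)).nonempty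
  have hzR : R ≤ dist x₀ z := by simpa [dist_comm] using hz
  have hRle : R ≤ 4 * (lam₂ * c₁ + c₂) := by
    refine le_of_forall_lt_imp_le_of_dense fun r hrR => ?_
    have hr' : max r (R / 2) < R := max_lt hrR (half_lt_self hR)
    obtain ⟨γ, hγ0, hγ⟩ := hXgeo.exists_isometryOn_Icc (hr'.le.trans hzR)
    exact (le_max_left r _).trans (IsZeroHyperbolic.le_of_isometryOn_Icc hXconn hYtree hYgeo
      (lt_max_of_lt_right (half_pos hR)) hr' hγ0 hγ hup hlow (by linarith))
  linarith [mul_nonneg (zero_le_one.trans hlam₂) hc₁.le]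

theorem stmt_1
    {X Y : Type*} [MetricSpace X] [MetricSpace Y]
    (hXgeo : IsGeodesicMetricSpace X)
    (hXconn : ∀ (x y : X) (r r' : ℝ), 0 < r → 0 < r' → r' ≤ r / 2 →
      IsConnected (ball x r \ ball y r'))
    (hYgeo : IsGeodesicMetricSpace Y)
    (hYtree : ∀ p q r s : Y,
      dist p q + dist r s ≤ max (dist p r + dist q s) (dist p s + dist q r))
    (x₀ : X) (R lam₁ lam₂ c₁ c₂ : ℝ)
    (hR : 0 < R) (hlam₁ : 1 ≤ lam₁) (hlam₂ : 1 ≤ lam₂) (hc₁ : 0 < c₁) (hc₂ : 0 ≤ c₂)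
    (f : closedBall x₀ R → Y)
    (hqi : ∀ x x' : closedBall x₀ R,
      (dist (x : X) (x' : X) - c₂) / lam₂ ≤ dist (f x) (f x') ∧
      dist (f x) (f x') ≤ lam₁ * dist (x : X) (x' : X) + c₁) :
    R ≤ 12 * lam₂ * c₁ + 4 * c₂ :=
  stmt_1_general hXgeo hXconn hYgeo hYtree x₀ R lam₁ lam₂ c₁ c₂ hR hlam₂ hc₁ f hqi
end

section
/- Let μ > 0, p > 1 and a ≤ R be real numbers. Let f : ℝ → ℝ be continuously differentiable on [a,R]. Then ∫_a^R |f(t) − f(R)|^p · e^{μt} dt ≤ (p/μ)^p · ∫_a^R |f'(t)|^p · e^{μt} dt. -/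
/-!
Put `ε = μ / p`. Write `f R - f t = ∫_t^R f'` and apply Hölder's inequality with weight
`e^{(p-1)εs}`; its dual weight `e^{-εs}` has tail integral `∫_t^R e^{-εs} ds ≤ e^{-εt} / ε`,
so `|f t - f R|^p e^{μt} ≤ ε^{1-p} e^{εt} ∫_t^R |f'|^p e^{(p-1)εs} ds`.
Integrating in `t`, the inner integral is disposed of by an integration by parts,
`∫_a^R e^{εt} ∫_t^R φ ≤ ε⁻¹ ∫_a^R e^{εt} φ` for `φ ≥ 0`, which produces the constant
`ε^{-p} = (p/μ)^p` and the weight `e^{εt} e^{(p-1)εt} = e^{μt}`.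
-/

open Set Real MeasureTheory intervalIntegral

lemma integral_exp_neg_mul_le {c : ℝ} (hc : 0 < c) (t R : ℝ) :
    ∫ s in t..R, exp (-(c * s)) ≤ exp (-(c * t)) / c := by
  have hderiv : ∀ s ∈ uIcc t R,
      HasDerivAt (fun s => -exp (-(c * s)) / c) (exp (-(c * s))) s := fun s _ => by
    have hlin : HasDerivAt (fun s => -(c * s)) (-c) s := by
      simpa using ((hasDerivAt_id s).const_mul c).fun_neg
    exact (hlin.exp.fun_neg.div_const c).congr_deriv (by field_simp)
  rw [integral_eq_sub_of_hasDerivAt hderiv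
    ((by fun_prop : Continuous fun s => exp (-(c * s))).intervalIntegrable t R)]
  have := div_pos (exp_pos (-(c * R))) hc
  rw [neg_div, neg_div]
  linarith

lemma integral_eq_sub_of_hasDerivWithinAt_Icc {f f' : ℝ → ℝ} {a b : ℝ} (hab : a ≤ b)
    (hderiv : ∀ t ∈ Icc a b, HasDerivWithinAt f (f' t) (Icc a b) t)
    (hint : IntervalIntegrable f' volume a b) :
    ∫ t in a..b, f' t = f b - f a :=
  integral_eq_sub_of_hasDeriv_right_of_le hab (HasDerivWithinAt.continuousOn hderiv)
    (fun x hx => ((hderiv x (Ioo_subset_Icc_self hx)).hasDerivAt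
      (Icc_mem_nhds hx.1 hx.2)).hasDerivWithinAt) hint

lemma Continuous.memLp_restrict_Ioc {F : ℝ → ℝ} (hF : Continuous F) (t R : ℝ)
    (r : ENNReal) :
    MemLp F r (volume.restrict (Ioc t R)) := by
  obtain ⟨C, hC⟩ := isCompact_Icc.exists_bound_of_continuousOn (f := F) hF.continuousOn
  exact MemLp.of_bound hF.aestronglyMeasurable C
    ((ae_restrict_mem measurableSet_Ioc).mono fun x hx => hC x (Ioc_subset_Icc_self hx))

/-- Hölder's inequality for `|g| = (|g| w^{1/p}) · w^{-1/p}`, raised to the power `p`. -/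
lemma rpow_integral_abs_le_weighted {p : ℝ} (hp : 1 < p) {g w : ℝ → ℝ} (hg : Continuous g)
    (hw : Continuous w) (hw0 : ∀ s, 0 < w s) {t R : ℝ} (htR : t ≤ R) :
    (∫ s in t..R, |g s|) ^ p ≤
      (∫ s in t..R, |g s| ^ p * w s) * (∫ s in t..R, w s ^ (-(p - 1)⁻¹)) ^ (p - 1) := by
  have hp0 : 0 < p := by linarith
  have hwp : ∀ s (r : ℝ), 0 ≤ w s ^ r := fun s r => rpow_nonneg (hw0 s).le r
  have hholder := integral_mul_le_Lp_mul_Lq_of_nonneg (μ := volume.restrict (Ioc t R))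
    (.conjExponent hp) (f := fun s => |g s| * w s ^ p⁻¹) (g := fun s => w s ^ (-p⁻¹))
    (.of_forall fun s => mul_nonneg (abs_nonneg _) (hwp s p⁻¹))
    (.of_forall fun s => hwp s (-p⁻¹))
    ((hg.abs.mul (hw.rpow_const fun s => Or.inl (hw0 s).ne')).memLp_restrict_Ioc t R _)
    ((hw.rpow_const fun s => Or.inl (hw0 s).ne').memLp_restrict_Ioc t R _)
  have hprod : ∀ s, |g s| * w s ^ p⁻¹ * w s ^ (-p⁻¹) = |g s| := fun s => by
    rw [mul_assoc, ← rpow_add (hw0 s), add_neg_cancel, rpow_zero, mul_one]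
  have hpow_left : ∀ s, (|g s| * w s ^ p⁻¹) ^ p = |g s| ^ p * w s := fun s => by
    rw [mul_rpow (abs_nonneg _) (hwp s _), ← rpow_mul (hw0 s).le, inv_mul_cancel₀ hp0.ne',
      rpow_one]
  have hpow_right : ∀ s, (w s ^ (-p⁻¹)) ^ p.conjExponent = w s ^ (-(p - 1)⁻¹) := fun s => by
    rw [← rpow_mul (hw0 s).le, Real.conjExponent]
    congr 1
    field_simp
  simp only [hprod, hpow_left, hpow_right] at hholder
  rw [← integral_of_le htR, ← integral_of_le htR, ← integral_of_le htR] at hholder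
  have hA : 0 ≤ ∫ s in t..R, |g s| ^ p * w s :=
    integral_nonneg htR fun s _ => mul_nonneg (rpow_nonneg (abs_nonneg _) p) (hw0 s).le
  have hB : 0 ≤ ∫ s in t..R, w s ^ (-(p - 1)⁻¹) := integral_nonneg htR fun s _ => hwp s _
  calc (∫ s in t..R, |g s|) ^ p
      ≤ ((∫ s in t..R, |g s| ^ p * w s) ^ (1 / p) *
          (∫ s in t..R, w s ^ (-(p - 1)⁻¹)) ^ (1 / p.conjExponent)) ^ p :=
        rpow_le_rpow (integral_nonneg htR fun s _ => abs_nonneg _) hholder hp0.le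
    _ = _ := by
      rw [mul_rpow (rpow_nonneg hA _) (rpow_nonneg hB _), ← rpow_mul hA, ← rpow_mul hB,
        one_div_mul_cancel hp0.ne', rpow_one, Real.conjExponent]
      congr 2
      field_simp

lemma abs_integral_rpow_mul_exp_le {p ε : ℝ} (hp : 1 < p) (hε : 0 < ε) {g : ℝ → ℝ}
    (hg : Continuous g) {t R : ℝ} (htR : t ≤ R) :
    |∫ s in t..R, g s| ^ p * exp (p * ε * t) ≤
      ε ^ (1 - p) * (exp (ε * t) * ∫ s in t..R, |g s| ^ p * exp ((p - 1) * ε * s)) := by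
  have hp1 : 0 < p - 1 := by linarith
  have hA : 0 ≤ ∫ s in t..R, |g s| ^ p * exp ((p - 1) * ε * s) :=
    integral_nonneg htR fun s _ => by positivity
  have hdual : ∀ s, exp ((p - 1) * ε * s) ^ (-(p - 1)⁻¹) = exp (-(ε * s)) := fun s => by
    rw [← exp_mul]
    congr 1
    field_simp [hp1.ne']
  have hholder := rpow_integral_abs_le_weighted hp hg
    (by fun_prop : Continuous fun s => exp ((p - 1) * ε * s)) (fun s => exp_pos _) htR
  simp only [hdual] at hholder
  have htail : (∫ s in t..R, exp (-(ε * s))) ^ (p - 1) ≤ (exp (-(ε * t)) / ε) ^ (p - 1) :=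
    rpow_le_rpow (integral_nonneg htR fun s _ => (exp_pos _).le)
      (integral_exp_neg_mul_le hε t R) hp1.le
  have hexp : exp (-(ε * t) * (p - 1)) * exp (p * ε * t) = exp (ε * t) := by
    rw [← exp_add]
    ring_nf
  calc |∫ s in t..R, g s| ^ p * exp (p * ε * t)
      ≤ (∫ s in t..R, |g s| ^ p * exp ((p - 1) * ε * s)) * (exp (-(ε * t)) / ε) ^ (p - 1) *
          exp (p * ε * t) := by
        gcongr
        calc |∫ s in t..R, g s| ^ p ≤ (∫ s in t..R, |g s|) ^ p :=
              rpow_le_rpow (abs_nonneg _) (abs_integral_le_integral_abs htR) (by linarith)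
          _ ≤ _ := hholder.trans (by gcongr)
    _ = _ := by
      rw [div_rpow (exp_pos _).le hε.le, ← exp_mul, div_eq_mul_inv, ← rpow_neg hε.le, neg_sub,
        ← hexp]
      ring

lemma hasDerivAt_integral_lower {φ : ℝ → ℝ} (hφ : Continuous φ) (R t : ℝ) :
    HasDerivAt (fun t => ∫ s in t..R, φ s) (-φ t) t :=
  integral_hasDerivAt_left (hφ.intervalIntegrable t R) (hφ.stronglyMeasurableAtFilter _ _)
    hφ.continuousAt

lemma continuous_integral_lower {φ : ℝ → ℝ} (hφ : Continuous φ) (R : ℝ) :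
    Continuous fun t => ∫ s in t..R, φ s :=
  continuous_iff_continuousAt.2 fun t => (hasDerivAt_integral_lower hφ R t).continuousAt

lemma integral_exp_mul_integral_le {c a R : ℝ} (hc : 0 < c) (haR : a ≤ R) {φ : ℝ → ℝ}
    (hφ : Continuous φ) (hφ0 : ∀ s ∈ Icc a R, 0 ≤ φ s) :
    ∫ t in a..R, exp (c * t) * ∫ s in t..R, φ s ≤
      c⁻¹ * ∫ t in a..R, exp (c * t) * φ t := by
  set H : ℝ → ℝ := fun t => ∫ s in t..R, φ s
  have hH : Continuous H := continuous_integral_lower hφ R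
  have hderiv : ∀ t ∈ uIcc a R, HasDerivAt (fun t => exp (c * t) * H t)
      (c * (exp (c * t) * H t) - exp (c * t) * φ t) t := fun t _ => by
    have hlin : HasDerivAt (fun t => c * t) c t := by simpa using (hasDerivAt_id t).const_mul c
    exact (hlin.exp.fun_mul (hasDerivAt_integral_lower hφ R t)).congr_deriv (by ring)
  have hint₁ : IntervalIntegrable (fun t => c * (exp (c * t) * H t)) volume a R :=
    (by fun_prop : Continuous _).intervalIntegrable a R
  have hint₂ : IntervalIntegrable (fun t => exp (c * t) * φ t) volume a R :=
    (by fun_prop : Continuous _).intervalIntegrable a R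
  have hftc := integral_eq_sub_of_hasDerivAt hderiv (hint₁.sub hint₂)
  rw [integral_sub hint₁ hint₂, intervalIntegral.integral_const_mul] at hftc
  simp only [H, integral_same, mul_zero] at hftc
  have hHa : 0 ≤ exp (c * a) * H a := mul_nonneg (exp_pos _).le (integral_nonneg haR hφ0)
  rw [le_inv_mul_iff₀ hc]
  linarith

theorem integral_abs_integral_rpow_mul_exp_le {μ p a R : ℝ} (hμ : 0 < μ) (hp : 1 < p)
    (haR : a ≤ R) {g : ℝ → ℝ} (hg : Continuous g) :
    ∫ t in a..R, |∫ s in t..R, g s| ^ p * exp (μ * t) ≤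
      (p / μ) ^ p * ∫ t in a..R, |g t| ^ p * exp (μ * t) := by
  have hp0 : 0 < p := by linarith
  obtain ⟨ε, hε, rfl⟩ : ∃ ε, 0 < ε ∧ μ = p * ε :=
    ⟨μ / p, by positivity, by field_simp⟩
  set φ : ℝ → ℝ := fun s => |g s| ^ p * exp ((p - 1) * ε * s)
  have hgp : Continuous fun s => |g s| ^ p := hg.abs.rpow_const fun _ => Or.inr hp0.le
  have hup : Continuous fun t => |∫ s in t..R, g s| ^ p :=
    (continuous_integral_lower hg R).abs.rpow_const fun _ => Or.inr hp0.le
  have hφ : Continuous φ := by fun_prop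
  have hH : Continuous fun t => ∫ s in t..R, φ s := continuous_integral_lower hφ R
  have hconst : ε ^ (1 - p) * ε⁻¹ = (p / (p * ε)) ^ p := by
    rw [div_mul_cancel_left₀ hp0.ne', inv_rpow hε.le, rpow_sub hε, rpow_one]
    field_simp
  have hweight : ∀ t, exp (ε * t) * φ t = |g t| ^ p * exp (p * ε * t) := fun t => by
    rw [mul_left_comm, ← exp_add]
    ring_nf
  calc ∫ t in a..R, |∫ s in t..R, g s| ^ p * exp (p * ε * t)
      ≤ ∫ t in a..R, ε ^ (1 - p) * (exp (ε * t) * ∫ s in t..R, φ s) :=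
        integral_mono_on haR ((by fun_prop : Continuous _).intervalIntegrable a R)
          ((by fun_prop : Continuous _).intervalIntegrable a R)
          fun t ht => abs_integral_rpow_mul_exp_le hp hε hg ht.2
    _ = ε ^ (1 - p) * ∫ t in a..R, exp (ε * t) * ∫ s in t..R, φ s :=
        intervalIntegral.integral_const_mul _ _
    _ ≤ ε ^ (1 - p) * (ε⁻¹ * ∫ t in a..R, exp (ε * t) * φ t) := by
        gcongr
        exact integral_exp_mul_integral_le hε haR hφ fun s _ => by positivity
    _ = (p / (p * ε)) ^ p * ∫ t in a..R, |g t| ^ p * exp (p * ε * t) := by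
        rw [integral_congr fun t _ => hweight t, ← hconst, mul_assoc]

theorem stmt_3
    (μ p a R : ℝ) (hμ : 0 < μ) (hp : 1 < p) (haR : a ≤ R)
    (f f' : ℝ → ℝ)
    (hderiv : ∀ t ∈ Icc a R, HasDerivWithinAt f (f' t) (Icc a R) t)
    (hcont : ContinuousOn f' (Icc a R)) :
    ∫ t in a..R, |f t - f R| ^ p * Real.exp (μ * t) ≤
      (p / μ) ^ p * ∫ t in a..R, |f' t| ^ p * Real.exp (μ * t) := by
  set g := IccExtend haR ((Icc a R).domRestrict f')
  have hg : Continuous g := hcont.domRestrict.Icc_extend'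
  have hgf' : EqOn g f' (Icc a R) := fun t ht => IccExtend_of_mem haR _ ht
  have hftc : ∀ t ∈ Icc a R, f R - f t = ∫ s in t..R, g s := fun t ht =>
    (integral_eq_sub_of_hasDerivWithinAt_Icc ht.2 (fun x hx => by
      rw [hgf' (Icc_subset_Icc_left ht.1 hx)]
      exact (hderiv x (Icc_subset_Icc_left ht.1 hx)).mono (Icc_subset_Icc_left ht.1))
      (hg.intervalIntegrable t R)).symm
  calc ∫ t in a..R, |f t - f R| ^ p * exp (μ * t)
      = ∫ t in a..R, |∫ s in t..R, g s| ^ p * exp (μ * t) :=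
        integral_congr fun t ht => by
          rw [← hftc t (uIcc_of_le haR ▸ ht), abs_sub_comm]
    _ ≤ (p / μ) ^ p * ∫ t in a..R, |g t| ^ p * exp (μ * t) :=
        integral_abs_integral_rpow_mul_exp_le hμ hp haR hg
    _ = (p / μ) ^ p * ∫ t in a..R, |f' t| ^ p * exp (μ * t) := by
        rw [integral_congr fun t ht => by rw [hgf' (uIcc_of_le haR ▸ ht)]]
end

section
/- Let μ > 0, p > 1 and a ∈ ℝ. Let f : ℝ → ℝ be continuously differentiable on [a,∞) and assume that t ↦ |f'(t)|^p·e^{μt} is integrable on [a,∞). Then f(t) converges to a finite limit c as t → ∞, and moreover |f(t) − c|^p·e^{μt} → 0 as t → ∞. -/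
/-!
Hölder's inequality against the weight `e^{μs}` gives, for every `t`,
`(∫_t^∞ |f'|)^p e^{μt} ≤ ((p-1)/μ)^{p-1} ∫_t^∞ |f'|^p e^{μs}`.
Hence `f'` is integrable on `(a, ∞)`, so `f` has a limit `c` with `c - f t = ∫_t^∞ f'`, and
`|f t - c|^p e^{μt}` is bounded by a multiple of the tail of a convergent integral.
-/

open Set Real Filter MeasureTheory

section WeightedHolder

variable {α : Type*} [MeasurableSpace α] {ν : Measure α} {p : ℝ} {g w : α → ℝ}

lemma memLp_ofReal_of_integrable_rpow (hp : 0 < p) (hg : AEStronglyMeasurable g ν)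
    (hg0 : ∀ x, 0 ≤ g x) (hint : Integrable (fun x => g x ^ p) ν) :
    MemLp g (ENNReal.ofReal p) ν := by
  rw [← integrable_norm_rpow_iff hg (by simpa) ENNReal.ofReal_ne_top,
    ENNReal.toReal_ofReal hp.le]
  simpa only [Real.norm_of_nonneg (hg0 _)] using hint

/-- Hölder's inequality for the factorisation `|g| = (|g| w^{1/p}) · w^{-1/p}`. -/
lemma integrable_and_rpow_integral_abs_le (hp : 1 < p) (hg : AEStronglyMeasurable g ν)
    (hw : Measurable w) (hw0 : ∀ x, 0 < w x)
    (hgw : Integrable (fun x => |g x| ^ p * w x) ν)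
    (hw' : Integrable (fun x => w x ^ (-(p - 1)⁻¹)) ν) :
    Integrable g ν ∧ (∫ x, |g x| ∂ν) ^ p ≤
      (∫ x, |g x| ^ p * w x ∂ν) * (∫ x, w x ^ (-(p - 1)⁻¹) ∂ν) ^ (p - 1) := by
  have hp0 : 0 < p := by linarith
  set q := p / (p - 1) with hq
  have hpq : p.HolderConjugate q := (holderConjugate_iff_eq_conjExponent hp).2 rfl
  set G : α → ℝ := fun x => |g x| * w x ^ p⁻¹
  set H : α → ℝ := fun x => w x ^ (-p⁻¹)
  have hG0 : ∀ x, 0 ≤ G x := fun x => mul_nonneg (abs_nonneg _) (rpow_nonneg (hw0 x).le _)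
  have hH0 : ∀ x, 0 ≤ H x := fun x => rpow_nonneg (hw0 x).le _
  have hGp : ∀ x, G x ^ p = |g x| ^ p * w x := fun x => by
    rw [mul_rpow (abs_nonneg _) (rpow_nonneg (hw0 x).le _), ← rpow_mul (hw0 x).le,
      inv_mul_cancel₀ hp0.ne', rpow_one]
  have hHq : ∀ x, H x ^ q = w x ^ (-(p - 1)⁻¹) := fun x => by
    rw [← rpow_mul (hw0 x).le]
    congr 1
    rw [hq]
    field_simp [show p - 1 ≠ 0 by linarith]
  have hGH : ∀ x, G x * H x = |g x| := fun x => by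
    rw [mul_assoc, ← rpow_add (hw0 x), add_neg_cancel, rpow_zero, mul_one]
  have hGm : MemLp G (ENNReal.ofReal p) ν :=
    memLp_ofReal_of_integrable_rpow hp0
      (hg.norm.mul (hw.pow_const _).aestronglyMeasurable) hG0 (by simpa only [hGp] using hgw)
  have hHm : MemLp H (ENNReal.ofReal q) ν :=
    memLp_ofReal_of_integrable_rpow hpq.symm.pos (hw.pow_const _).aestronglyMeasurable hH0
      (by simpa only [hHq] using hw')
  constructor
  · have hHG : Integrable (H * G) ν :=
      memLp_one_iff_integrable.mp (hGm.mul hHm (hpqr := hpq.ennrealOfReal.symm))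
    refine (integrable_norm_iff hg).mp (hHG.congr (ae_of_all _ fun x => ?_))
    rw [Pi.mul_apply, mul_comm, hGH]
    exact (Real.norm_eq_abs _).symm
  · have holder :=
      integral_mul_le_Lp_mul_Lq_of_nonneg hpq (ae_of_all _ hG0) (ae_of_all _ hH0) hGm hHm
    simp only [hGH, hGp, hHq] at holder
    have hA : 0 ≤ ∫ x, |g x| ^ p * w x ∂ν :=
      integral_nonneg fun x => mul_nonneg (rpow_nonneg (abs_nonneg _) _) (hw0 x).le
    have hB : 0 ≤ ∫ x, w x ^ (-(p - 1)⁻¹) ∂ν := integral_nonneg fun x => rpow_nonneg (hw0 x).le _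
    calc (∫ x, |g x| ∂ν) ^ p
        ≤ ((∫ x, |g x| ^ p * w x ∂ν) ^ (1 / p) * (∫ x, w x ^ (-(p - 1)⁻¹) ∂ν) ^ (1 / q)) ^ p :=
          rpow_le_rpow (integral_nonneg fun x => abs_nonneg _) holder hp0.le
      _ = _ := by
          rw [mul_rpow (rpow_nonneg hA _) (rpow_nonneg hB _), ← rpow_mul hA, ← rpow_mul hB,
            one_div_mul_cancel hp0.ne', rpow_one]
          congr 2
          rw [hq]
          field_simp [show p - 1 ≠ 0 by linarith]

end WeightedHolder

lemma integrableOn_and_rpow_integral_abs_Ioi_mul_exp_le {μ p t : ℝ} {g : ℝ → ℝ} (hμ : 0 < μ)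
    (hp : 1 < p) (hg : AEStronglyMeasurable g (volume.restrict (Ioi t)))
    (hint : IntegrableOn (fun s => |g s| ^ p * exp (μ * s)) (Ioi t)) :
    IntegrableOn g (Ioi t) ∧ (∫ s in Ioi t, |g s|) ^ p * exp (μ * t) ≤
      ((p - 1) / μ) ^ (p - 1) * ∫ s in Ioi t, |g s| ^ p * exp (μ * s) := by
  have hp1 : 0 < p - 1 := by linarith
  set b := μ / (p - 1)
  have hb : 0 < b := div_pos hμ hp1
  have hb_mul : b * (p - 1) = μ := div_mul_cancel₀ μ hp1.ne'
  have hweight : ∀ s, exp (μ * s) ^ (-(p - 1)⁻¹) = exp (-b * s) := fun s => by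
    rw [← exp_mul, ← hb_mul]
    field_simp
  have hweight_int : ∫ s in Ioi t, exp (-b * s) = exp (-b * t) / b := by
    rw [integral_exp_mul_Ioi (neg_neg_of_pos hb), neg_div_neg_eq]
  obtain ⟨hg_int, hle⟩ := integrable_and_rpow_integral_abs_le hp hg (by fun_prop)
    (fun _ => exp_pos _) hint (by simp only [hweight]; exact exp_neg_integrableOn_Ioi t hb)
  simp only [hweight, hweight_int] at hle
  have hconst : (exp (-b * t) / b) ^ (p - 1) * exp (μ * t) = ((p - 1) / μ) ^ (p - 1) := by
    rw [div_rpow (exp_pos _).le hb.le, ← exp_mul, div_mul_eq_mul_div, ← exp_add,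
      show -b * t * (p - 1) + μ * t = 0 by rw [← hb_mul]; ring, exp_zero, one_div,
      ← inv_rpow hb.le, inv_div]
  refine ⟨hg_int, ?_⟩
  calc (∫ s in Ioi t, |g s|) ^ p * exp (μ * t)
      ≤ (∫ s in Ioi t, |g s| ^ p * exp (μ * s)) * (exp (-b * t) / b) ^ (p - 1) * exp (μ * t) := by
        gcongr
    _ = ((p - 1) / μ) ^ (p - 1) * ∫ s in Ioi t, |g s| ^ p * exp (μ * s) := by
        rw [mul_assoc, hconst, mul_comm]

lemma aestronglyMeasurable_of_hasDerivAt {f f' : ℝ → ℝ} {s : Set ℝ} (hs : MeasurableSet s)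
    (hderiv : ∀ x ∈ s, HasDerivAt f (f' x) x) : AEStronglyMeasurable f' (volume.restrict s) :=
  (aestronglyMeasurable_deriv f _).congr <|
    (ae_restrict_mem hs).mono fun x hx => (hderiv x hx).deriv

lemma abs_sub_le_integral_abs_Ioi_of_hasDerivAt {f f' : ℝ → ℝ} {t c : ℝ}
    (hderiv : ∀ x ∈ Ici t, HasDerivAt f (f' x) x) (hint : IntegrableOn f' (Ioi t))
    (hf : Tendsto f atTop (nhds c)) : |f t - c| ≤ ∫ s in Ioi t, |f' s| := by
  rw [abs_sub_comm, ← integral_Ioi_of_hasDerivAt_of_tendsto' hderiv hint hf]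
  exact abs_integral_le_integral_abs

theorem stmt_4_general
    (μ p a : ℝ) (hμ : 0 < μ) (hp : 1 < p)
    (f f' : ℝ → ℝ)
    (hderiv : ∀ t ∈ Ici a, HasDerivWithinAt f (f' t) (Ici a) t)
    (hint : IntegrableOn (fun t => |f' t| ^ p * Real.exp (μ * t)) (Ici a)) :
    ∃ c : ℝ, Tendsto f atTop (nhds c) ∧
      Tendsto (fun t => |f t - c| ^ p * Real.exp (μ * t)) atTop (nhds 0) := by
  have hderiv' : ∀ x ∈ Ioi a, HasDerivAt f (f' x) x := fun x hx =>
    (hderiv x (mem_Ici_of_Ioi hx)).hasDerivAt (Ici_mem_nhds hx)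
  have hint' := hint.mono_set Ioi_subset_Ici_self
  obtain ⟨hf'_int, -⟩ := integrableOn_and_rpow_integral_abs_Ioi_mul_exp_le hμ hp
    (aestronglyMeasurable_of_hasDerivAt measurableSet_Ioi hderiv') hint'
  have hlim := tendsto_limUnder_of_hasDerivAt_of_integrableOn_Ioi hderiv' hf'_int
  refine ⟨_, hlim, ?_⟩
  have hbound : ∀ t > a, |f t - limUnder atTop f| ^ p * exp (μ * t) ≤
      ((p - 1) / μ) ^ (p - 1) * ∫ s in Ioi t, |f' s| ^ p * exp (μ * s) := fun t ht => by
    have hsub : Ioi t ⊆ Ioi a := Ioi_subset_Ioi ht.le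
    obtain ⟨-, hle⟩ := integrableOn_and_rpow_integral_abs_Ioi_mul_exp_le hμ hp
      ((aestronglyMeasurable_of_hasDerivAt measurableSet_Ioi hderiv').mono_set hsub)
      (hint'.mono_set hsub)
    refine le_trans ?_ hle
    gcongr
    exact abs_sub_le_integral_abs_Ioi_of_hasDerivAt (fun x hx => hderiv' x (ht.trans_le hx))
      (hf'_int.mono_set hsub) hlim
  refine tendsto_of_tendsto_of_tendsto_of_le_of_le' tendsto_const_nhds ?_
    (Eventually.of_forall fun t => by positivity) ((eventually_gt_atTop a).mono hbound)
  simpa using (tendsto_integral_Ioi_zero tendsto_id).const_mul (((p - 1) / μ) ^ (p - 1))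

theorem stmt_4
    (μ p a : ℝ) (hμ : 0 < μ) (hp : 1 < p)
    (f f' : ℝ → ℝ)
    (hderiv : ∀ t ∈ Ici a, HasDerivWithinAt f (f' t) (Ici a) t)
    (hcont : ContinuousOn f' (Ici a))
    (hint : IntegrableOn (fun t => |f' t| ^ p * Real.exp (μ * t)) (Ici a)) :
    ∃ c : ℝ, Tendsto f atTop (nhds c) ∧
      Tendsto (fun t => |f t - c| ^ p * Real.exp (μ * t)) atTop (nhds 0) :=
  stmt_4_general μ p a hμ hp f f' hderiv hint
end

section
/- Let μ > 0, p > 1 and a ∈ ℝ. Let f : ℝ → ℝ be continuously differentiable on [a,∞), assume that t ↦ |f'(t)|^p·e^{μt} is integrable on [a,∞), and let c be the limit of f(t) as t → ∞ (which exists). Then ∫_a^∞ |f(t) − c|^p · e^{μt} dt ≤ (p/μ)^p · ∫_a^∞ |f'(t)|^p · e^{μt} dt. -/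
/-!
Since `f t - c = -∫ s in Ioi t, f' s`, one has `|f t - c| ≤ ∫ u in Ioi 0, |f' (t + u)|`.
Hölder's inequality against the weight `exp (-(μ / p) * u)`, whose total mass is `p / μ`, gives
`(∫ u in Ioi 0, |f' (t + u)|) ^ p * exp (μ * t)
  ≤ (p / μ) ^ (p - 1) * ∫ u in Ioi 0, |f' (t + u)| ^ p * exp (μ * (t + u)) * exp (-(μ / p) * u)`,
and integrating over `t > a` and exchanging the integrals yields one more factor `p / μ`.
Working with lower Lebesgue integrals, Hölder and Tonelli need no integrability assumptions.
-/

open Set Real Filter MeasureTheory Topology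
open scoped ENNReal

theorem ENNReal.rpow_lintegral_mul_le {α : Type*} [MeasurableSpace α] {ν : Measure α} {p : ℝ}
    (hp : 1 ≤ p) {φ k : α → ℝ≥0∞} (hφ : AEMeasurable φ ν) (hk : AEMeasurable k ν) :
    (∫⁻ x, φ x * k x ∂ν) ^ p ≤ (∫⁻ x, k x ∂ν) ^ (p - 1) * ∫⁻ x, φ x ^ p * k x ∂ν := by
  have hp0 : 0 < p := by linarith
  have hholder := ENNReal.lintegral_mul_norm_pow_le ((hφ.pow_const p).mul hk) hk
    (inv_nonneg.2 hp0.le) (sub_nonneg.2 (inv_le_one_of_one_le₀ hp)) (add_sub_cancel _ _)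
  have hpt : ∀ x, (φ x ^ p * k x) ^ p⁻¹ * k x ^ (1 - p⁻¹) = φ x * k x := fun x => by
    rw [ENNReal.mul_rpow_of_nonneg _ _ (inv_nonneg.2 hp0.le), ← ENNReal.rpow_mul,
      mul_inv_cancel₀ hp0.ne', ENNReal.rpow_one, mul_assoc,
      ← ENNReal.rpow_add_of_nonneg _ _ (inv_nonneg.2 hp0.le)
        (sub_nonneg.2 (inv_le_one_of_one_le₀ hp)), add_sub_cancel, ENNReal.rpow_one]
  simp only [Pi.mul_apply, hpt] at hholder
  calc (∫⁻ x, φ x * k x ∂ν) ^ p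
      ≤ ((∫⁻ x, φ x ^ p * k x ∂ν) ^ p⁻¹ * (∫⁻ x, k x ∂ν) ^ (1 - p⁻¹)) ^ p :=
        ENNReal.rpow_le_rpow hholder hp0.le
    _ = (∫⁻ x, k x ∂ν) ^ (p - 1) * ∫⁻ x, φ x ^ p * k x ∂ν := by
      rw [ENNReal.mul_rpow_of_nonneg _ _ hp0.le, ← ENNReal.rpow_mul, ← ENNReal.rpow_mul,
        inv_mul_cancel₀ hp0.ne', ENNReal.rpow_one, mul_comm, sub_mul, one_mul,
        inv_mul_cancel₀ hp0.ne']

theorem lintegral_exp_neg_mul_Ioi_zero {β : ℝ} (hβ : 0 < β) :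
    ∫⁻ u in Ioi 0, ENNReal.ofReal (exp (-β * u)) = ENNReal.ofReal β⁻¹ := by
  rw [← ofReal_integral_eq_lintegral_ofReal (exp_neg_integrableOn_Ioi 0 hβ)
    (ae_of_all _ fun _ => (exp_pos _).le), integral_exp_mul_Ioi (neg_lt_zero.2 hβ)]
  rw [mul_zero, exp_zero, neg_div_neg_eq, one_div]

theorem setLIntegral_Ioi_comp_add_right (G : ℝ → ℝ≥0∞) (a b : ℝ) :
    ∫⁻ x in Ioi a, G (x + b) = ∫⁻ y in Ioi (a + b), G y := by
  simpa [preimage_add_const_Ioi] using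
    (measurePreserving_add_right volume b).setLIntegral_comp_preimage_emb
      (measurableEmbedding_addRight b) G (Ioi (a + b))

theorem lintegral_Ioi_lintegral_Ioi_comp_add_le {G k : ℝ → ℝ≥0∞} (hG : Measurable G)
    (hk : Measurable k) (a : ℝ) :
    ∫⁻ t in Ioi a, ∫⁻ u in Ioi 0, G (t + u) * k u ≤
      (∫⁻ u in Ioi 0, k u) * ∫⁻ s in Ioi a, G s := by
  rw [lintegral_lintegral_swap
    ((hG.comp measurable_add).mul (hk.comp measurable_snd)).aemeasurable,
    ← lintegral_mul_const _ hk]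
  refine setLIntegral_mono' measurableSet_Ioi fun u (hu : 0 < u) => ?_
  rw [lintegral_mul_const _ (f := fun x => G (x + u)) (hG.comp (measurable_add_const u)),
    setLIntegral_Ioi_comp_add_right, mul_comm]
  gcongr
  exact le_add_of_nonneg_right hu.le

theorem rpow_lintegral_Ioi_mul_exp_le {μ p : ℝ} (hμ : 0 < μ) (hp : 1 ≤ p) {g : ℝ → ℝ≥0∞}
    (hg : Measurable g) (t : ℝ) :
    (∫⁻ s in Ioi t, g s) ^ p * ENNReal.ofReal (exp (μ * t)) ≤
      ENNReal.ofReal (p / μ) ^ (p - 1) * ∫⁻ u in Ioi 0,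
        g (t + u) ^ p * ENNReal.ofReal (exp (μ * (t + u))) *
          ENNReal.ofReal (exp (-(μ / p) * u)) := by
  have hp0 : 0 < p := by linarith
  set β := μ / p
  have hsplit : ∫⁻ s in Ioi t, g s =
      ∫⁻ u in Ioi 0,
        g (t + u) * ENNReal.ofReal (exp (β * u)) * ENNReal.ofReal (exp (-β * u)) := by
    simp_rw [mul_assoc, ← ENNReal.ofReal_mul (exp_pos _).le, ← exp_add, neg_mul, add_neg_cancel,
      exp_zero, ENNReal.ofReal_one, mul_one, add_comm t]
    simpa using (setLIntegral_Ioi_comp_add_right g 0 t).symm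
  rw [hsplit]
  calc _ ≤ (ENNReal.ofReal β⁻¹ ^ (p - 1) * ∫⁻ u in Ioi 0,
          (g (t + u) * ENNReal.ofReal (exp (β * u))) ^ p * ENNReal.ofReal (exp (-β * u))) *
          ENNReal.ofReal (exp (μ * t)) := by
        rw [← lintegral_exp_neg_mul_Ioi_zero (div_pos hμ hp0)]
        gcongr
        exact ENNReal.rpow_lintegral_mul_le hp (by fun_prop) (by fun_prop)
    _ = _ := by
      rw [inv_div, mul_assoc, ← lintegral_mul_const' _ _ ENNReal.ofReal_ne_top]
      congr 1
      refine lintegral_congr fun u => ?_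
      rw [ENNReal.mul_rpow_of_nonneg _ _ hp0.le,
        ENNReal.ofReal_rpow_of_nonneg (exp_pos _).le hp0.le, ← exp_mul]
      have hexp : exp (β * u * p) * exp (μ * t) = exp (μ * (t + u)) := by
        rw [← exp_add]
        congr 1
        have hβp : β * p = μ := div_mul_cancel₀ μ hp0.ne'
        linear_combination u * hβp
      rw [mul_right_comm _ (ENNReal.ofReal (exp (-β * u))), mul_assoc (g (t + u) ^ p),
        ← ENNReal.ofReal_mul (exp_pos _).le, hexp]

theorem lintegral_rpow_lintegral_Ioi_mul_exp_le {μ p : ℝ} (hμ : 0 < μ) (hp : 1 ≤ p)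
    {g : ℝ → ℝ≥0∞} (hg : Measurable g) (a : ℝ) :
    ∫⁻ t in Ioi a, (∫⁻ s in Ioi t, g s) ^ p * ENNReal.ofReal (exp (μ * t)) ≤
      ENNReal.ofReal (p / μ) ^ p * ∫⁻ s in Ioi a, g s ^ p * ENNReal.ofReal (exp (μ * s)) := by
  have hpμ : 0 < p / μ := div_pos (by linarith) hμ
  calc _ ≤ ∫⁻ t in Ioi a, ENNReal.ofReal (p / μ) ^ (p - 1) * ∫⁻ u in Ioi 0,
          g (t + u) ^ p * ENNReal.ofReal (exp (μ * (t + u))) *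
            ENNReal.ofReal (exp (-(μ / p) * u)) :=
        lintegral_mono fun t => rpow_lintegral_Ioi_mul_exp_le hμ hp hg t
    _ ≤ ENNReal.ofReal (p / μ) ^ (p - 1) *
          ((∫⁻ u in Ioi 0, ENNReal.ofReal (exp (-(μ / p) * u))) *
            ∫⁻ s in Ioi a, g s ^ p * ENNReal.ofReal (exp (μ * s))) := by
        rw [lintegral_const_mul' _ _ (by finiteness)]
        gcongr
        exact lintegral_Ioi_lintegral_Ioi_comp_add_le
          (G := fun s => g s ^ p * ENNReal.ofReal (exp (μ * s))) (by fun_prop) (by fun_prop) a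
    _ = _ := by
      rw [lintegral_exp_neg_mul_Ioi_zero (div_pos hμ (by linarith)), inv_div, ← mul_assoc]
      congr 1
      conv_lhs => arg 2; rw [← ENNReal.rpow_one (ENNReal.ofReal (p / μ))]
      rw [← ENNReal.rpow_add _ _ (ENNReal.ofReal_pos.2 hpμ).ne' ENNReal.ofReal_ne_top,
        sub_add_cancel]

section
variable {E : Type*} [NormedAddCommGroup E] [NormedSpace ℝ E] [CompleteSpace E]
  {f f' : ℝ → E} {a : ℝ} {c : E}

theorem enorm_sub_le_lintegral_Ioi_enorm_deriv
    (hderiv : ∀ x ∈ Ici a, HasDerivWithinAt f (f' x) (Ici a) x) (hcont : ContinuousOn f' (Ici a))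
    (hlim : Tendsto f atTop (𝓝 c)) {t : ℝ} (ht : a ≤ t) :
    ‖f t - c‖ₑ ≤ ∫⁻ s in Ioi t, ‖f' s‖ₑ := by
  have hsub : Ici t ⊆ Ici a := Ici_subset_Ici.2 ht
  have hR : ∀ R, t ≤ R → ‖f R - f t‖ₑ ≤ ∫⁻ s in Ioi t, ‖f' s‖ₑ := by
    intro R hR
    rw [← intervalIntegral.integral_eq_sub_of_hasDeriv_right_of_le hR
      (fun x hx => (hderiv x (hsub hx.1)).continuousWithinAt.mono
        (Icc_subset_Ici_self.trans hsub))
      (fun x hx => (hderiv x (hsub hx.1.le)).mono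
        (Ioi_subset_Ici_self.trans (Ici_subset_Ici.2 (ht.trans hx.1.le))))
      ((hcont.mono (Icc_subset_Ici_self.trans hsub)).intervalIntegrable_of_Icc hR),
      intervalIntegral.integral_of_le hR]
    exact (enorm_integral_le_lintegral_enorm _).trans (lintegral_mono_set Ioc_subset_Ioi_self)
  rw [enorm_sub_rev]
  exact le_of_tendsto (hlim.sub_const (f t)).enorm ((eventually_ge_atTop t).mono hR)

theorem lintegral_enorm_sub_rpow_mul_exp_le {μ p : ℝ} (hμ : 0 < μ) (hp : 1 ≤ p)
    (hderiv : ∀ x ∈ Ici a, HasDerivWithinAt f (f' x) (Ici a) x) (hcont : ContinuousOn f' (Ici a))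
    (hlim : Tendsto f atTop (𝓝 c)) :
    ∫⁻ t in Ioi a, ‖f t - c‖ₑ ^ p * ENNReal.ofReal (exp (μ * t)) ≤
      ENNReal.ofReal (p / μ) ^ p * ∫⁻ t in Ioi a, ‖f' t‖ₑ ^ p * ENNReal.ofReal (exp (μ * t)) := by
  set g := (Ici a).indicator fun s => ‖f' s‖ₑ
  have hg : Measurable g := by
    refine measurable_of_restrict_of_restrict_compl (s := Ici a) measurableSet_Ici ?_ ?_
    · have : (Ici a).domRestrict g = fun x : Ici a => ‖f' x‖ₑ :=
        funext fun x => indicator_of_mem x.2 (fun s => ‖f' s‖ₑ)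
      rw [this]
      exact hcont.domRestrict.enorm.measurable
    · have : (Ici a)ᶜ.domRestrict g = fun _ => 0 :=
        funext fun x => indicator_of_notMem x.2 (fun s => ‖f' s‖ₑ)
      rw [this]
      exact measurable_const
  have hgf' : ∀ t, a ≤ t → EqOn g (fun s => ‖f' s‖ₑ) (Ioi t) := fun t ht s hs =>
    indicator_of_mem (mem_Ici.2 (ht.trans hs.le)) _
  calc _ ≤ ∫⁻ t in Ioi a, (∫⁻ s in Ioi t, g s) ^ p * ENNReal.ofReal (exp (μ * t)) := by
        refine setLIntegral_mono' measurableSet_Ioi fun t (ht : a < t) => ?_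
        rw [setLIntegral_congr_fun measurableSet_Ioi (hgf' t ht.le)]
        gcongr
        exact enorm_sub_le_lintegral_Ioi_enorm_deriv hderiv hcont hlim ht.le
    _ ≤ _ := lintegral_rpow_lintegral_Ioi_mul_exp_le hμ hp hg a
    _ = _ := by
      rw [setLIntegral_congr_fun measurableSet_Ioi fun s hs => by rw [hgf' a le_rfl hs]]
end

theorem ofReal_abs_rpow_mul_exp {p : ℝ} (hp : 0 ≤ p) (x y : ℝ) :
    ENNReal.ofReal (|x| ^ p * exp y) = ‖x‖ₑ ^ p * ENNReal.ofReal (exp y) := by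
  rw [ENNReal.ofReal_mul (by positivity), ← ENNReal.ofReal_rpow_of_nonneg (abs_nonneg x) hp,
    Real.enorm_eq_ofReal_abs]

theorem stmt_5
    (μ p a : ℝ) (hμ : 0 < μ) (hp : 1 < p)
    (f f' : ℝ → ℝ)
    (hderiv : ∀ t ∈ Ici a, HasDerivWithinAt f (f' t) (Ici a) t)
    (hcont : ContinuousOn f' (Ici a))
    (hint : IntegrableOn (fun t => |f' t| ^ p * Real.exp (μ * t)) (Ici a))
    (c : ℝ) (hlim : Tendsto f atTop (nhds c)) :
    ∫ t in Ici a, |f t - c| ^ p * Real.exp (μ * t) ≤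
      (p / μ) ^ p * ∫ t in Ici a, |f' t| ^ p * Real.exp (μ * t) := by
  have hp0 : 0 ≤ p := by linarith
  have hfc : ContinuousOn f (Ici a) := fun x hx => (hderiv x hx).continuousWithinAt
  have hint' := hint.mono_set Ioi_subset_Ici_self
  have hlhs_meas : AEStronglyMeasurable (fun t => |f t - c| ^ p * exp (μ * t))
      (volume.restrict (Ioi a)) :=
    ((((hfc.sub continuousOn_const).abs.rpow_const fun _ _ => Or.inr hp0).mul
      (by fun_prop)).mono Ioi_subset_Ici_self).aestronglyMeasurable measurableSet_Ioi
  rw [integral_Ici_eq_integral_Ioi, integral_Ici_eq_integral_Ioi,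
    integral_eq_lintegral_of_nonneg_ae (ae_of_all _ fun t => by positivity) hlhs_meas,
    integral_eq_lintegral_of_nonneg_ae (ae_of_all _ fun t => by positivity) hint'.1,
    ← ENNReal.toReal_ofReal (by positivity : 0 ≤ (p / μ) ^ p), ← ENNReal.toReal_mul,
    ← ENNReal.ofReal_rpow_of_nonneg (by positivity) hp0]
  refine ENNReal.toReal_mono (by finiteness [hint'.lintegral_lt_top.ne]) ?_
  simp only [ofReal_abs_rpow_mul_exp hp0]
  exact lintegral_enorm_sub_rpow_mul_exp_le hμ hp.le hderiv hcont hlim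
end

section
/- Let X be a separable metric space (with its Borel σ-algebra) and Y a metric space. Let λ₁ ≥ 1, λ₂ ≥ 1, c₁ > 0, c₂ ≥ 0 and let f : X → Y satisfy (1/λ₂)(dist(x,x') − c₂) ≤ dist(f x, f x') ≤ λ₁·dist(x,x') + c₁ for all x, x' ∈ X. Then there exists a Borel-measurable map g : X → Y such that dist(f x, g x) ≤ 2c₁ for all x ∈ X, and for all x, x' ∈ X: (1/λ₂)(dist(x,x') − (c₂ + 2c₁/λ₁)) ≤ dist(g x, g x') ≤ λ₁·dist(x,x') + 3c₁. -/
/-!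
Choose a dense sequence `u` in `X` and send `x` to the first `u n` within `r = c₁ / λ₁` of it.
The index map is Borel because its fibres are differences of balls, so `g = f ∘ u ∘ N` is
measurable whatever `f` is. Moving every point by at most `r` changes distances by at most `2r`,
which costs `2λ₁r = 2c₁` in the additive constant of the upper bound and `2r` in the lower one.
-/

open Metric

section PseudoMetric

variable {X Y : Type*} [PseudoMetricSpace X]

def IsQuasiIsometricEmbedding [PseudoMetricSpace Y] (lam₁ lam₂ c₁ c₂ : ℝ) (f : X → Y) : Prop :=
  ∀ x x' : X, (dist x x' - c₂) / lam₂ ≤ dist (f x) (f x') ∧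
    dist (f x) (f x') ≤ lam₁ * dist x x' + c₁

theorem dist_map_le_dist_add_of_forall_dist_le {p : X → X} {r : ℝ}
    (hp : ∀ x, dist x (p x) ≤ r) (x x' : X) :
    dist (p x) (p x') ≤ dist x x' + 2 * r := by
  have := dist_triangle4 (p x) x x' (p x')
  linarith [dist_comm x (p x) ▸ hp x, hp x']

theorem dist_le_dist_map_add_of_forall_dist_le {p : X → X} {r : ℝ}
    (hp : ∀ x, dist x (p x) ≤ r) (x x' : X) :
    dist x x' ≤ dist (p x) (p x') + 2 * r := by
  have := dist_triangle4 x (p x) (p x') x'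
  linarith [dist_comm x' (p x') ▸ hp x', hp x]

theorem IsQuasiIsometricEmbedding.comp_of_forall_dist_le [PseudoMetricSpace Y]
    {lam₁ lam₂ c₁ c₂ r : ℝ} {f : X → Y} {p : X → X}
    (hf : IsQuasiIsometricEmbedding lam₁ lam₂ c₁ c₂ f) (hlam₁ : 0 ≤ lam₁) (hlam₂ : 0 ≤ lam₂)
    (hp : ∀ x, dist x (p x) ≤ r) :
    IsQuasiIsometricEmbedding lam₁ lam₂ (c₁ + 2 * (lam₁ * r)) (c₂ + 2 * r) (f ∘ p) := by
  intro x x'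
  obtain ⟨hlower, hupper⟩ := hf (p x) (p x')
  constructor
  · calc (dist x x' - (c₂ + 2 * r)) / lam₂ ≤ (dist (p x) (p x') - c₂) / lam₂ := by
          refine div_le_div_of_nonneg_right ?_ hlam₂
          linarith [dist_le_dist_map_add_of_forall_dist_le hp x x']
      _ ≤ dist (f (p x)) (f (p x')) := hlower
  · calc dist (f (p x)) (f (p x')) ≤ lam₁ * dist (p x) (p x') + c₁ := hupper
      _ ≤ lam₁ * (dist x x' + 2 * r) + c₁ := by
          gcongr
          exact dist_map_le_dist_add_of_forall_dist_le hp x x'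
      _ = lam₁ * dist x x' + (c₁ + 2 * (lam₁ * r)) := by ring

theorem exists_measurable_nat_forall_dist_lt [TopologicalSpace.SeparableSpace X] [Nonempty X]
    [MeasurableSpace X] [OpensMeasurableSpace X] {r : ℝ} (hr : 0 < r) :
    ∃ (u : ℕ → X) (N : X → ℕ), Measurable N ∧ ∀ x, dist x (u (N x)) < r := by
  classical
  obtain ⟨u, hu⟩ := TopologicalSpace.exists_dense_seq X
  have hcover : ∀ x, ∃ n, dist x (u n) < r := fun x => denseRange_iff.1 hu x r hr
  exact ⟨u, fun x => Nat.find (hcover x),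
    measurable_find hcover fun n => measurableSet_ball,
    fun x => Nat.find_spec (hcover x)⟩

end PseudoMetric

theorem stmt_7_general
    {X Y : Type*} [MetricSpace X] [TopologicalSpace.SeparableSpace X]
    [MeasurableSpace X] [BorelSpace X]
    [MetricSpace Y] [MeasurableSpace Y]
    (lam₁ lam₂ c₁ c₂ : ℝ) (hlam₁ : 1 ≤ lam₁) (hlam₂ : 1 ≤ lam₂)
    (hc₁ : 0 < c₁)
    (f : X → Y)
    (hqi : ∀ x x' : X,
      (dist x x' - c₂) / lam₂ ≤ dist (f x) (f x') ∧
      dist (f x) (f x') ≤ lam₁ * dist x x' + c₁) :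
    ∃ g : X → Y, Measurable g ∧ (∀ x, dist (f x) (g x) ≤ 2 * c₁) ∧
      ∀ x x' : X,
        (dist x x' - (c₂ + 2 * c₁ / lam₁)) / lam₂ ≤ dist (g x) (g x') ∧
        dist (g x) (g x') ≤ lam₁ * dist x x' + 3 * c₁ := by
  rcases isEmpty_or_nonempty X with hX | hX
  · exact ⟨f, measurable_of_empty f, isEmptyElim, isEmptyElim⟩
  have hlam₁_pos : 0 < lam₁ := zero_lt_one.trans_le hlam₁
  have hr : lam₁ * (c₁ / lam₁) = c₁ := mul_div_cancel₀ c₁ hlam₁_pos.ne'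
  obtain ⟨u, N, hN, hu⟩ := exists_measurable_nat_forall_dist_lt (X := X) (div_pos hc₁ hlam₁_pos)
  have hg := IsQuasiIsometricEmbedding.comp_of_forall_dist_le hqi hlam₁_pos.le
    (zero_le_one.trans hlam₂) (p := u ∘ N) fun x => (hu x).le
  refine ⟨f ∘ u ∘ N, (measurable_from_nat (f := f ∘ u)).comp hN, fun x => ?_, fun x x' => ?_⟩
  · calc dist (f x) (f (u (N x))) ≤ lam₁ * (c₁ / lam₁) + c₁ := by
          refine (hqi _ _).2.trans ?_
          gcongr
          exact (hu x).le
      _ = 2 * c₁ := by rw [hr]; ring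
  · obtain ⟨hlower, hupper⟩ := hg x x'
    exact ⟨by rwa [mul_div_assoc], by simp only [Function.comp_apply] at hupper ⊢; linarith⟩

theorem stmt_7
    {X Y : Type*} [MetricSpace X] [TopologicalSpace.SeparableSpace X]
    [MeasurableSpace X] [BorelSpace X]
    [MetricSpace Y] [MeasurableSpace Y] [BorelSpace Y]
    (lam₁ lam₂ c₁ c₂ : ℝ) (hlam₁ : 1 ≤ lam₁) (hlam₂ : 1 ≤ lam₂)
    (hc₁ : 0 < c₁) (hc₂ : 0 ≤ c₂)
    (f : X → Y)
    (hqi : ∀ x x' : X,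
      (dist x x' - c₂) / lam₂ ≤ dist (f x) (f x') ∧
      dist (f x) (f x') ≤ lam₁ * dist x x' + c₁) :
    ∃ g : X → Y, Measurable g ∧ (∀ x, dist (f x) (g x) ≤ 2 * c₁) ∧
      ∀ x x' : X,
        (dist x x' - (c₂ + 2 * c₁ / lam₁)) / lam₂ ≤ dist (g x) (g x') ∧
        dist (g x) (g x') ≤ lam₁ * dist x x' + 3 * c₁ :=
  stmt_7_general lam₁ lam₂ c₁ c₂ hlam₁ hlam₂ hc₁ f hqi
end

section
/- Let X and Y be metric spaces equipped with σ-finite Borel measures. Let λ₁ ≥ 1, λ₂ ≥ 1, c₁ ≥ 0, c₂ ≥ 0 and let f : X → Y be a measurable map with (1/λ₂)(dist(x,x') − c₂) ≤ dist(f x, f x') ≤ λ₁·dist(x,x') + c₁ for all x, x' ∈ X. Let p ≥ 1, let φ : Y × Y → [0,∞) be measurable with φ ≤ Sφ everywhere, ∫_Y φ(y, y') dy' = 1 for every y, and φ(y,y') = 0 whenever dist(y,y') > Rφ; let ψ : X × X → [0,∞) be measurable with ψ ≤ Sψ everywhere and ψ(x,x') = 0 whenever dist(x,x') > Rψ. Assume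 V := sup_{x∈X} vol(closed ball B(x, 2λ₂Rφ + c₂)) < ∞. Let a : Y × Y → ℝ be measurable, and define (a ∗_t φ)(x,x') = ∫_{Y×Y} a(y,y') φ(f x, y) φ(f x', y') dy dy' and ψ'(y,y') = ∫_{X×X} φ(f x, y) φ(f x', y') ψ(x,x') dx dx'. Then: (i) ∫_{X×X} |(a ∗_t φ)(x,x')|^p ψ(x,x') dx dx' ≤ ∫_{Y×Y} |a(y,y')|^p ψ'(y,y') dy dy'; (ii) ψ'(y,y') = 0 whenever dist(y,y') > 2Rφ + λ₁Rψ + c₁; (iii) ψ'(y,y') ≤ Sψ·(Sφ·V)² for all y, y'. -/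
/-!
For fixed `x, x'` the weights `φ (f x, ·) * φ (f x', ·)` form a probability density on `Y × Y`,
so Jensen's inequality gives `|(a ∗_t φ)(x, x')| ^ p ≤ ∫ |a| ^ p φ (f x, ·) φ (f x', ·)`.
Integrating against `ψ` and exchanging the order of integration (Tonelli) turns the weight into
`ψ'`. The integrand of `ψ' y y'` lives on `f⁻¹ B(y, Rφ) × f⁻¹ B(y', Rφ)`: the upper quasi-isometry
bound and the triangle inequality give the support bound, and by the lower bound each preimage
lies in a ball of radius `2 λ₂ Rφ + c₂`, hence has volume at most `V`, which gives the sup bound.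
-/

open Metric MeasureTheory
open scoped ENNReal

section Lintegral

variable {α β : Type*} [MeasurableSpace α] [MeasurableSpace β]

lemma enorm_integral_rpow_le_lintegral_enorm_rpow (μ : Measure α) [IsProbabilityMeasure μ]
    {g : α → ℝ} (hg : AEStronglyMeasurable g μ) {p : ℝ} (hp : 1 ≤ p) :
    ‖∫ x, g x ∂μ‖ₑ ^ p ≤ ∫⁻ x, ‖g x‖ₑ ^ p ∂μ := by
  have hp0 : 0 < p := zero_lt_one.trans_le hp
  have h := eLpNorm'_le_eLpNorm'_of_exponent_le zero_lt_one hp μ hg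
  rw [eLpNorm'_eq_lintegral_enorm, eLpNorm'_eq_lintegral_enorm] at h
  simp only [ENNReal.rpow_one, div_one] at h
  calc ‖∫ x, g x ∂μ‖ₑ ^ p ≤ ((∫⁻ x, ‖g x‖ₑ ^ p ∂μ) ^ (1 / p)) ^ p :=
        ENNReal.rpow_le_rpow ((enorm_integral_le_lintegral_enorm g).trans h) hp0.le
    _ = ∫⁻ x, ‖g x‖ₑ ^ p ∂μ := by
        rw [← ENNReal.rpow_mul, one_div_mul_cancel hp0.ne', ENNReal.rpow_one]

lemma ofReal_abs_integral_mul_rpow_le {μ : Measure α} {w g : α → ℝ} (hw : Measurable w)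
    (hw0 : 0 ≤ w) (hw1 : ∫⁻ x, ENNReal.ofReal (w x) ∂μ = 1) (hg : Measurable g)
    {p : ℝ} (hp : 1 ≤ p) :
    ENNReal.ofReal (|∫ x, g x * w x ∂μ| ^ p) ≤ ∫⁻ x, ENNReal.ofReal (w x) * ‖g x‖ₑ ^ p ∂μ := by
  set ν := μ.withDensity fun x => ENNReal.ofReal (w x)
  have : IsProbabilityMeasure ν :=
    ⟨by rw [withDensity_apply _ MeasurableSet.univ, setLIntegral_univ, hw1]⟩
  have hν : ∫ x, g x * w x ∂μ = ∫ x, g x ∂ν := by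
    rw [integral_withDensity_eq_integral_toReal_smul hw.ennreal_ofReal
      (.of_forall fun _ => ENNReal.ofReal_lt_top)]
    simp [ENNReal.toReal_ofReal (hw0 _), mul_comm]
  calc ENNReal.ofReal (|∫ x, g x * w x ∂μ| ^ p) = ‖∫ x, g x ∂ν‖ₑ ^ p := by
        rw [hν, Real.enorm_eq_ofReal_abs,
          ENNReal.ofReal_rpow_of_nonneg (abs_nonneg _) (zero_le_one.trans hp)]
    _ ≤ ∫⁻ x, ‖g x‖ₑ ^ p ∂ν :=
        enorm_integral_rpow_le_lintegral_enorm_rpow ν hg.aestronglyMeasurable hp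
    _ = ∫⁻ x, ENNReal.ofReal (w x) * ‖g x‖ₑ ^ p ∂μ :=
        lintegral_withDensity_eq_lintegral_mul _ hw.ennreal_ofReal (hg.enorm.pow_const p)

lemma lintegral_ofReal_eq_one_of_integral_eq_one {μ : Measure α} {u : α → ℝ} (hu0 : 0 ≤ u)
    (hu1 : ∫ x, u x ∂μ = 1) : ∫⁻ x, ENNReal.ofReal (u x) ∂μ = 1 := by
  rw [← ofReal_integral_eq_lintegral_ofReal (.of_integral_ne_zero (by simp [hu1]))
    (.of_forall hu0), hu1, ENNReal.ofReal_one]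

lemma lintegral_ofReal_mul_prod_eq_one {μ : Measure α} {ν : Measure β} [SFinite ν]
    {u : α → ℝ} {v : β → ℝ} (hu : Measurable u) (hv : Measurable v) (hu0 : 0 ≤ u) (hv0 : 0 ≤ v)
    (hu1 : ∫ x, u x ∂μ = 1) (hv1 : ∫ y, v y ∂ν = 1) :
    ∫⁻ z, ENNReal.ofReal (u z.1 * v z.2) ∂(μ.prod ν) = 1 := by
  simp_rw [ENNReal.ofReal_mul (hu0 _)]
  rw [lintegral_prod_mul hu.ennreal_ofReal.aemeasurable hv.ennreal_ofReal.aemeasurable,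
    lintegral_ofReal_eq_one_of_integral_eq_one hu0 hu1,
    lintegral_ofReal_eq_one_of_integral_eq_one hv0 hv1, one_mul]

lemma lintegral_lintegral_mul_swap {μ : Measure α} {ν : Measure β} [SFinite μ] [SFinite ν]
    {K : α → β → ℝ≥0∞} (hK : Measurable (Function.uncurry K)) {g : β → ℝ≥0∞} (hg : Measurable g)
    {h : α → ℝ≥0∞} (hh : Measurable h) :
    ∫⁻ x, (∫⁻ y, K x y * g y ∂ν) * h x ∂μ = ∫⁻ y, g y * ∫⁻ x, K x y * h x ∂μ ∂ν := by
  have hKx : ∀ x, Measurable (K x) := fun x => hK.of_uncurry_left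
  have hKy : ∀ y, Measurable (K · y) := fun y => hK.of_uncurry_right
  calc ∫⁻ x, (∫⁻ y, K x y * g y ∂ν) * h x ∂μ = ∫⁻ x, ∫⁻ y, K x y * g y * h x ∂ν ∂μ :=
        lintegral_congr fun x => (lintegral_mul_const _ ((hKx x).mul hg)).symm
    _ = ∫⁻ y, ∫⁻ x, K x y * g y * h x ∂μ ∂ν :=
        lintegral_lintegral_swap ((hK.mul (hg.comp measurable_snd)).mul
          (hh.comp measurable_fst)).aemeasurable
    _ = ∫⁻ y, g y * ∫⁻ x, K x y * h x ∂μ ∂ν := lintegral_congr fun y =>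
        (lintegral_congr fun x => by ring).trans (lintegral_const_mul _ ((hKy y).mul hh))

end Lintegral

section Transport

variable {X Y : Type*}

/- `kernelConv ν φ a (f x) (f x')` is the transporting convolution `(a ∗_t φ)(x, x')`, and
`transportWeight μ f φ ψ` is the weight `ψ'`. -/
noncomputable def kernelConv [MeasurableSpace Y] (ν : Measure Y) (φ a : Y × Y → ℝ) (z z' : Y) :
    ℝ :=
  ∫ q : Y × Y, a q * (φ (z, q.1) * φ (z', q.2)) ∂(ν.prod ν)

noncomputable def transportWeight [MeasurableSpace X] (μ : Measure X) (f : X → Y)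
    (φ : Y × Y → ℝ) (ψ : X × X → ℝ) (y y' : Y) : ℝ :=
  ∫ q : X × X, φ (f q.1, y) * φ (f q.2, y') * ψ q ∂(μ.prod μ)

lemma ofReal_abs_kernelConv_rpow_le [MeasurableSpace Y] {ν : Measure Y} [SFinite ν]
    {φ a : Y × Y → ℝ} (hφ : Measurable φ) (hφ0 : ∀ q, 0 ≤ φ q) (hφ1 : ∀ y, ∫ y', φ (y, y') ∂ν = 1)
    (ha : Measurable a) {p : ℝ} (hp : 1 ≤ p) (z z' : Y) :
    ENNReal.ofReal (|kernelConv ν φ a z z'| ^ p) ≤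
      ∫⁻ r, ENNReal.ofReal (φ (z, r.1) * φ (z', r.2)) * ‖a r‖ₑ ^ p ∂(ν.prod ν) :=
  ofReal_abs_integral_mul_rpow_le (w := fun r : Y × Y => φ (z, r.1) * φ (z', r.2))
    (by fun_prop) (fun r => mul_nonneg (hφ0 (z, r.1)) (hφ0 (z', r.2)))
    (lintegral_ofReal_mul_prod_eq_one (u := fun y => φ (z, y)) (v := fun y => φ (z', y))
      (by fun_prop) (by fun_prop) (fun _ => hφ0 _) (fun _ => hφ0 _) (hφ1 z) (hφ1 z')) ha hp

variable {f : X → Y}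

lemma preimage_closedBall_subset_closedBall [PseudoMetricSpace X] [PseudoMetricSpace Y]
    {lam c R : ℝ} (hlam : 0 < lam) (hf : ∀ x x', (dist x x' - c) / lam ≤ dist (f x) (f x'))
    {y : Y} {x₀ : X} (hx₀ : f x₀ ∈ closedBall y R) :
    f ⁻¹' closedBall y R ⊆ closedBall x₀ (2 * lam * R + c) := by
  intro x hx
  rw [Set.mem_preimage, mem_closedBall] at hx
  rw [mem_closedBall] at hx₀ ⊢
  have h₁ : dist (f x) (f x₀) ≤ 2 * R := by linarith [dist_triangle_right (f x) (f x₀) y]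
  have h₂ := (div_le_iff₀ hlam).1 ((hf x x₀).trans h₁)
  linarith

lemma measure_preimage_closedBall_le_iSup [PseudoMetricSpace X] [PseudoMetricSpace Y]
    [MeasurableSpace X] (μ : Measure X) {lam c R : ℝ} (hlam : 0 < lam)
    (hf : ∀ x x', (dist x x' - c) / lam ≤ dist (f x) (f x')) (y : Y) :
    μ (f ⁻¹' closedBall y R) ≤ ⨆ x, μ (closedBall x (2 * lam * R + c)) := by
  rcases (f ⁻¹' closedBall y R).eq_empty_or_nonempty with h | ⟨x₀, hx₀⟩
  · simp [h]
  · exact (measure_mono (preimage_closedBall_subset_closedBall hlam hf hx₀)).trans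
      (le_iSup (fun x => μ (closedBall x _)) x₀)

variable {φ : Y × Y → ℝ} {ψ : X × X → ℝ} {Sφ Rφ Sψ Rψ : ℝ}

lemma transportWeight_eq_zero_of_lt_dist [PseudoMetricSpace X] [PseudoMetricSpace Y]
    [MeasurableSpace X] {μ : Measure X} {lam c : ℝ} (hlam : 0 ≤ lam)
    (hf : ∀ x x', dist (f x) (f x') ≤ lam * dist x x' + c)
    (hφsupp : ∀ y y', Rφ < dist y y' → φ (y, y') = 0)
    (hψsupp : ∀ x x', Rψ < dist x x' → ψ (x, x') = 0) {y y' : Y}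
    (h : 2 * Rφ + lam * Rψ + c < dist y y') : transportWeight μ f φ ψ y y' = 0 := by
  refine integral_eq_zero_of_ae (.of_forall fun q => ?_)
  by_contra hne
  simp only [Pi.zero_apply, mul_ne_zero_iff] at hne
  obtain ⟨⟨h₁, h₂⟩, h₃⟩ := hne
  have d₁ := not_lt.1 (mt (hφsupp _ _) h₁)
  have d₂ := not_lt.1 (mt (hφsupp _ _) h₂)
  have d₃ := not_lt.1 (mt (hψsupp _ _) h₃)
  nlinarith [dist_triangle4 y (f q.1) (f q.2) y', dist_comm y (f q.1), hf q.1 q.2,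
    mul_le_mul_of_nonneg_left d₃ hlam]

lemma mul_mul_le_indicator_preimage_closedBall [PseudoMetricSpace Y] (hφ0 : ∀ q, 0 ≤ φ q)
    (hφle : ∀ q, φ q ≤ Sφ) (hφsupp : ∀ y y', Rφ < dist y y' → φ (y, y') = 0) (hψ0 : ∀ q, 0 ≤ ψ q)
    (hψle : ∀ q, ψ q ≤ Sψ) (y y' : Y) (q : X × X) :
    φ (f q.1, y) * φ (f q.2, y') * ψ q ≤
      ((f ⁻¹' closedBall y Rφ) ×ˢ (f ⁻¹' closedBall y' Rφ)).indicator
        (fun _ => Sφ * Sφ * Sψ) q := by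
  by_cases hq : q ∈ (f ⁻¹' closedBall y Rφ) ×ˢ (f ⁻¹' closedBall y' Rφ)
  · rw [Set.indicator_of_mem hq]
    have hSφ : 0 ≤ Sφ := (hφ0 (f q.1, y)).trans (hφle _)
    exact mul_le_mul (mul_le_mul (hφle _) (hφle _) (hφ0 _) hSφ) (hψle _) (hψ0 _)
      (mul_nonneg hSφ hSφ)
  · rw [Set.indicator_of_notMem hq]
    simp only [Set.mem_prod, Set.mem_preimage, mem_closedBall, not_and_or, not_le] at hq
    rcases hq with h | h <;> simp [hφsupp _ _ h]

section Integrable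

variable [PseudoMetricSpace Y] [MeasurableSpace Y] [OpensMeasurableSpace Y] [MeasurableSpace X]
  {μ : Measure X} [SFinite μ]

lemma integrable_indicator_preimage_closedBall_prod (hf : Measurable f)
    (hT : ∀ y, μ (f ⁻¹' closedBall y Rφ) ≠ ∞) (y y' : Y) (C : ℝ) :
    Integrable (((f ⁻¹' closedBall y Rφ) ×ˢ (f ⁻¹' closedBall y' Rφ)).indicator fun _ => C)
      (μ.prod μ) := by
  refine (integrable_indicator_iff
    ((hf measurableSet_closedBall).prod (hf measurableSet_closedBall))).2 ?_
  refine integrableOn_const ?_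
  rw [Measure.prod_prod]
  exact ENNReal.mul_ne_top (hT y) (hT y')

lemma integrable_transportWeight_integrand (hf : Measurable f) (hφ : Measurable φ)
    (hφ0 : ∀ q, 0 ≤ φ q) (hφle : ∀ q, φ q ≤ Sφ)
    (hφsupp : ∀ y y', Rφ < dist y y' → φ (y, y') = 0) (hψ : Measurable ψ) (hψ0 : ∀ q, 0 ≤ ψ q)
    (hψle : ∀ q, ψ q ≤ Sψ) (hT : ∀ y, μ (f ⁻¹' closedBall y Rφ) ≠ ∞) (y y' : Y) :
    Integrable (fun q : X × X => φ (f q.1, y) * φ (f q.2, y') * ψ q) (μ.prod μ) := by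
  refine (integrable_indicator_preimage_closedBall_prod hf hT y y' (Sφ * Sφ * Sψ)).mono'
    (by fun_prop : Measurable _).aestronglyMeasurable (.of_forall fun q => ?_)
  rw [Real.norm_of_nonneg (mul_nonneg (mul_nonneg (hφ0 _) (hφ0 _)) (hψ0 _))]
  exact mul_mul_le_indicator_preimage_closedBall hφ0 hφle hφsupp hψ0 hψle y y' q

lemma ofReal_transportWeight (hf : Measurable f) (hφ : Measurable φ)
    (hφ0 : ∀ q, 0 ≤ φ q) (hφle : ∀ q, φ q ≤ Sφ)
    (hφsupp : ∀ y y', Rφ < dist y y' → φ (y, y') = 0) (hψ : Measurable ψ) (hψ0 : ∀ q, 0 ≤ ψ q)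
    (hψle : ∀ q, ψ q ≤ Sψ) (hT : ∀ y, μ (f ⁻¹' closedBall y Rφ) ≠ ∞) (y y' : Y) :
    ENNReal.ofReal (transportWeight μ f φ ψ y y') =
      ∫⁻ q, ENNReal.ofReal (φ (f q.1, y) * φ (f q.2, y')) * ENNReal.ofReal (ψ q) ∂(μ.prod μ) := by
  rw [transportWeight, ofReal_integral_eq_lintegral_ofReal
    (integrable_transportWeight_integrand hf hφ hφ0 hφle hφsupp hψ hψ0 hψle hT y y')
    (.of_forall fun q => mul_nonneg (mul_nonneg (hφ0 _) (hφ0 _)) (hψ0 _))]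
  exact lintegral_congr fun q => ENNReal.ofReal_mul (mul_nonneg (hφ0 _) (hφ0 _))

lemma transportWeight_le (hf : Measurable f) (hφ : Measurable φ)
    (hφ0 : ∀ q, 0 ≤ φ q) (hφle : ∀ q, φ q ≤ Sφ)
    (hφsupp : ∀ y y', Rφ < dist y y' → φ (y, y') = 0) (hψ : Measurable ψ) (hψ0 : ∀ q, 0 ≤ ψ q)
    (hψle : ∀ q, ψ q ≤ Sψ) (hSψ : 0 ≤ Sψ) {V : ℝ≥0∞} (hT : ∀ y, μ (f ⁻¹' closedBall y Rφ) ≤ V)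
    (hV : V ≠ ∞) (y y' : Y) :
    transportWeight μ f φ ψ y y' ≤ Sψ * (Sφ * V.toReal) ^ 2 := by
  have hT' : ∀ y, μ (f ⁻¹' closedBall y Rφ) ≠ ∞ := fun y => ne_top_of_le_ne_top hV (hT y)
  have hs : MeasurableSet ((f ⁻¹' closedBall y Rφ) ×ˢ (f ⁻¹' closedBall y' Rφ)) :=
    (hf measurableSet_closedBall).prod (hf measurableSet_closedBall)
  calc transportWeight μ f φ ψ y y'
      ≤ ∫ q, ((f ⁻¹' closedBall y Rφ) ×ˢ (f ⁻¹' closedBall y' Rφ)).indicator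
          (fun _ => Sφ * Sφ * Sψ) q ∂(μ.prod μ) :=
        integral_mono
          (integrable_transportWeight_integrand hf hφ hφ0 hφle hφsupp hψ hψ0 hψle hT' y y')
          (integrable_indicator_preimage_closedBall_prod hf hT' y y' _)
          (mul_mul_le_indicator_preimage_closedBall hφ0 hφle hφsupp hψ0 hψle y y')
    _ = (μ.prod μ).real ((f ⁻¹' closedBall y Rφ) ×ˢ (f ⁻¹' closedBall y' Rφ)) *
          (Sφ * Sφ * Sψ) := by
        rw [integral_indicator_const _ hs, smul_eq_mul]
    _ ≤ (V.toReal * V.toReal) * (Sφ * Sφ * Sψ) := by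
        refine mul_le_mul_of_nonneg_right ?_ (mul_nonneg (mul_self_nonneg Sφ) hSψ)
        rw [measureReal_def, Measure.prod_prod, ENNReal.toReal_mul]
        gcongr <;> exact hT _
    _ = Sψ * (Sφ * V.toReal) ^ 2 := by ring

lemma lintegral_rpow_kernelConv_mul_le {ν : Measure Y} [SFinite ν] (hf : Measurable f)
    (hφ : Measurable φ) (hφ0 : ∀ q, 0 ≤ φ q) (hφle : ∀ q, φ q ≤ Sφ)
    (hφsupp : ∀ y y', Rφ < dist y y' → φ (y, y') = 0)
    (hφ1 : ∀ y, ∫ y', φ (y, y') ∂ν = 1) (hψ : Measurable ψ) (hψ0 : ∀ q, 0 ≤ ψ q)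
    (hψle : ∀ q, ψ q ≤ Sψ) (hT : ∀ y, μ (f ⁻¹' closedBall y Rφ) ≠ ∞) {a : Y × Y → ℝ}
    (ha : Measurable a) {p : ℝ} (hp : 1 ≤ p) :
    ∫⁻ q, ENNReal.ofReal (|kernelConv ν φ a (f q.1) (f q.2)| ^ p * ψ q) ∂(μ.prod μ) ≤
      ∫⁻ r, ENNReal.ofReal (|a r| ^ p * transportWeight μ f φ ψ r.1 r.2) ∂(ν.prod ν) := by
  have hpow : ∀ t : ℝ, ENNReal.ofReal (|t| ^ p) = ‖t‖ₑ ^ p := fun t => by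
    rw [Real.enorm_eq_ofReal_abs, ENNReal.ofReal_rpow_of_nonneg (abs_nonneg t) (by linarith)]
  calc ∫⁻ q, ENNReal.ofReal (|kernelConv ν φ a (f q.1) (f q.2)| ^ p * ψ q) ∂(μ.prod μ)
      = ∫⁻ q, ENNReal.ofReal (|kernelConv ν φ a (f q.1) (f q.2)| ^ p) * ENNReal.ofReal (ψ q)
          ∂(μ.prod μ) :=
        lintegral_congr fun q => ENNReal.ofReal_mul (by positivity)
    _ ≤ ∫⁻ q, (∫⁻ r, ENNReal.ofReal (φ (f q.1, r.1) * φ (f q.2, r.2)) * ‖a r‖ₑ ^ p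
          ∂(ν.prod ν)) * ENNReal.ofReal (ψ q) ∂(μ.prod μ) :=
        lintegral_mono fun q => by
          gcongr
          exact ofReal_abs_kernelConv_rpow_le hφ hφ0 hφ1 ha hp _ _
    _ = ∫⁻ r, ‖a r‖ₑ ^ p * ∫⁻ q, ENNReal.ofReal (φ (f q.1, r.1) * φ (f q.2, r.2)) *
          ENNReal.ofReal (ψ q) ∂(μ.prod μ) ∂(ν.prod ν) :=
        lintegral_lintegral_mul_swap (by fun_prop) (by fun_prop) (by fun_prop)
    _ = ∫⁻ r, ENNReal.ofReal (|a r| ^ p * transportWeight μ f φ ψ r.1 r.2) ∂(ν.prod ν) :=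
        lintegral_congr fun r => by
          rw [ENNReal.ofReal_mul (by positivity), hpow,
            ofReal_transportWeight hf hφ hφ0 hφle hφsupp hψ hψ0 hψle hT]

end Integrable

end Transport

theorem stmt_8_general
    {X Y : Type*} [MetricSpace X] [MeasurableSpace X]
    [MetricSpace Y] [MeasurableSpace Y] [BorelSpace Y]
    (volX : Measure X) (volY : Measure Y) [SigmaFinite volX] [SigmaFinite volY]
    (lam₁ lam₂ c₁ c₂ : ℝ) (hlam₁ : 1 ≤ lam₁) (hlam₂ : 1 ≤ lam₂)
    (f : X → Y) (hf : Measurable f)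
    (hqi : ∀ x x' : X,
      (dist x x' - c₂) / lam₂ ≤ dist (f x) (f x') ∧
      dist (f x) (f x') ≤ lam₁ * dist x x' + c₁)
    (p : ℝ) (hp : 1 ≤ p)
    (φ : Y × Y → ℝ) (Sφ Rφ : ℝ)
    (hφmeas : Measurable φ) (hφnonneg : ∀ q, 0 ≤ φ q) (hφbdd : ∀ q, φ q ≤ Sφ)
    (hφint : ∀ y : Y, ∫ y', φ (y, y') ∂volY = 1)
    (hφsupp : ∀ y y' : Y, Rφ < dist y y' → φ (y, y') = 0)
    (ψ : X × X → ℝ) (Sψ Rψ : ℝ)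
    (hψmeas : Measurable ψ) (hψnonneg : ∀ q, 0 ≤ ψ q) (hψbdd : ∀ q, ψ q ≤ Sψ)
    (hψsupp : ∀ x x' : X, Rψ < dist x x' → ψ (x, x') = 0)
    (V : ENNReal)
    (hVdef : V = ⨆ x : X, volX (closedBall x (2 * lam₂ * Rφ + c₂)))
    (hVfin : V ≠ ⊤)
    (a : Y × Y → ℝ) (hameas : Measurable a)
    (A : X → X → ℝ)
    (hA : ∀ x x' : X, A x x' =
      ∫ q : Y × Y, a (q.1, q.2) * (φ (f x, q.1) * φ (f x', q.2)) ∂(volY.prod volY))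
    (ψ' : Y → Y → ℝ)
    (hψ' : ∀ y y' : Y, ψ' y y' =
      ∫ q : X × X, φ (f q.1, y) * φ (f q.2, y') * ψ (q.1, q.2) ∂(volX.prod volX)) :
    (∫⁻ q : X × X, ENNReal.ofReal (|A q.1 q.2| ^ p * ψ (q.1, q.2)) ∂(volX.prod volX)
        ≤ ∫⁻ q : Y × Y, ENNReal.ofReal (|a (q.1, q.2)| ^ p * ψ' q.1 q.2)
            ∂(volY.prod volY)) ∧
    (∀ y y' : Y, 2 * Rφ + lam₁ * Rψ + c₁ < dist y y' → ψ' y y' = 0) ∧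
    (∀ y y' : Y, ψ' y y' ≤ Sψ * (Sφ * V.toReal) ^ 2) := by
  obtain rfl : A = fun x x' => kernelConv volY φ a (f x) (f x') := funext₂ hA
  obtain rfl : ψ' = transportWeight volX f φ ψ := funext₂ hψ'
  have hT : ∀ y, volX (f ⁻¹' closedBall y Rφ) ≤ V := fun y =>
    hVdef ▸ measure_preimage_closedBall_le_iSup volX (by linarith) (fun x x' => (hqi x x').1) y
  refine ⟨lintegral_rpow_kernelConv_mul_le hf hφmeas hφnonneg hφbdd hφsupp hφint hψmeas hψnonneg
      hψbdd (fun y => ne_top_of_le_ne_top hVfin (hT y)) hameas hp,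
    fun y y' => transportWeight_eq_zero_of_lt_dist (by linarith) (fun x x' => (hqi x x').2)
      hφsupp hψsupp, fun y y' => ?_⟩
  rcases isEmpty_or_nonempty X with _ | ⟨⟨x₀⟩⟩
  · simp [transportWeight, hVdef, volX.eq_zero_of_isEmpty]
  · exact transportWeight_le hf hφmeas hφnonneg hφbdd hφsupp hψmeas hψnonneg hψbdd
      ((hψnonneg (x₀, x₀)).trans (hψbdd _)) hT hVfin y y'

theorem stmt_8
    {X Y : Type*} [MetricSpace X] [MeasurableSpace X] [BorelSpace X]
    [MetricSpace Y] [MeasurableSpace Y] [BorelSpace Y]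
    (volX : Measure X) (volY : Measure Y) [SigmaFinite volX] [SigmaFinite volY]
    (lam₁ lam₂ c₁ c₂ : ℝ) (hlam₁ : 1 ≤ lam₁) (hlam₂ : 1 ≤ lam₂)
    (hc₁ : 0 ≤ c₁) (hc₂ : 0 ≤ c₂)
    (f : X → Y) (hf : Measurable f)
    (hqi : ∀ x x' : X,
      (dist x x' - c₂) / lam₂ ≤ dist (f x) (f x') ∧
      dist (f x) (f x') ≤ lam₁ * dist x x' + c₁)
    (p : ℝ) (hp : 1 ≤ p)
    (φ : Y × Y → ℝ) (Sφ Rφ : ℝ)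
    (hφmeas : Measurable φ) (hφnonneg : ∀ q, 0 ≤ φ q) (hφbdd : ∀ q, φ q ≤ Sφ)
    (hφint : ∀ y : Y, ∫ y', φ (y, y') ∂volY = 1)
    (hφsupp : ∀ y y' : Y, Rφ < dist y y' → φ (y, y') = 0)
    (ψ : X × X → ℝ) (Sψ Rψ : ℝ)
    (hψmeas : Measurable ψ) (hψnonneg : ∀ q, 0 ≤ ψ q) (hψbdd : ∀ q, ψ q ≤ Sψ)
    (hψsupp : ∀ x x' : X, Rψ < dist x x' → ψ (x, x') = 0)
    (V : ENNReal)
    (hVdef : V = ⨆ x : X, volX (closedBall x (2 * lam₂ * Rφ + c₂)))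
    (hVfin : V ≠ ⊤)
    (a : Y × Y → ℝ) (hameas : Measurable a)
    (A : X → X → ℝ)
    (hA : ∀ x x' : X, A x x' =
      ∫ q : Y × Y, a (q.1, q.2) * (φ (f x, q.1) * φ (f x', q.2)) ∂(volY.prod volY))
    (ψ' : Y → Y → ℝ)
    (hψ' : ∀ y y' : Y, ψ' y y' =
      ∫ q : X × X, φ (f q.1, y) * φ (f q.2, y') * ψ (q.1, q.2) ∂(volX.prod volX)) :
    (∫⁻ q : X × X, ENNReal.ofReal (|A q.1 q.2| ^ p * ψ (q.1, q.2)) ∂(volX.prod volX)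
        ≤ ∫⁻ q : Y × Y, ENNReal.ofReal (|a (q.1, q.2)| ^ p * ψ' q.1 q.2)
            ∂(volY.prod volY)) ∧
    (∀ y y' : Y, 2 * Rφ + lam₁ * Rψ + c₁ < dist y y' → ψ' y y' = 0) ∧
    (∀ y y' : Y, ψ' y y' ≤ Sψ * (Sφ * V.toReal) ^ 2) :=
  stmt_8_general volX volY lam₁ lam₂ c₁ c₂ hlam₁ hlam₂ f hf hqi p hp φ Sφ Rφ hφmeas hφnonneg hφbdd
    hφint hφsupp ψ Sψ Rψ hψmeas hψnonneg hψbdd hψsupp V hVdef hVfin a hameas A hA ψ' hψ'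
end

section
/- Let A and B be metric spaces each of diameter at most 1, let θ : A → B, let c ≥ 1 and let 0 < α ≤ 1 ≤ β. Assume that for all x, y ∈ A: dist(θx, θy) ≤ c·dist(x,y)^α and dist(x,y)^β ≤ c·dist(θx, θy). Then for every R ≥ 0 and all x ≠ y in A such that dist(x,y) ≥ e^{−R} or dist(θx,θy) ≥ e^{−R}, the distance dist(θx,θy) is positive and |log(dist(θx,θy)/dist(x,y))| ≤ (log c + max(1−α, β−1)·R)/α. -/
open Metric Real

/-!
With `d = dist x y` and `D = dist (θ x) (θ y)`, the Hölder bounds become `log D ≤ log c + α log d` and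
`β log d ≤ log c + log D`. A linear inequality `p Λ ≤ k + q L` with `0 < q ≤ p` gives
`q (Λ - L) ≤ k + (p - q) R` as soon as `L` or `Λ` is at least `-R`; this is applied with
`(p, q) = (1, α)` and, with the two distances swapped, with `(p, q) = (β, 1)`.
-/

lemma sub_le_div_of_mul_le_add_mul {p q k R L Λ : ℝ} (hq : 0 < q) (hqp : q ≤ p) (hk : 0 ≤ k)
    (hR : 0 ≤ R) (h : p * Λ ≤ k + q * L) (hfar : -R ≤ L ∨ -R ≤ Λ) :
    Λ - L ≤ (k + (p - q) * R) / q := by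
  have hpq : 0 ≤ p - q := sub_nonneg.2 hqp
  rw [le_div_iff₀ hq]
  rcases hfar with hL | hΛ
  · rcases le_or_gt Λ L with hle | hlt
    · nlinarith [mul_nonneg hpq hR]
    · nlinarith [mul_nonneg hpq (neg_le_iff_add_nonneg.1 hL)]
  · nlinarith [mul_nonneg hpq (neg_le_iff_add_nonneg.1 hΛ)]

lemma mul_log_le_of_rpow_le_mul_rpow {x y c p q : ℝ} (hx : 0 < x) (hy : 0 < y) (hc : 0 < c)
    (h : x ^ p ≤ c * y ^ q) : p * log x ≤ log c + q * log y := by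
  have := log_le_log (rpow_pos_of_pos hx p) h
  rwa [log_mul hc.ne' (rpow_pos_of_pos hy q).ne', log_rpow hx, log_rpow hy] at this

theorem stmt_14_general
    {A B : Type*} [MetricSpace A] [MetricSpace B]
    (θ : A → B) (c α β : ℝ) (hc : 1 ≤ c)
    (hα0 : 0 < α) (hα1 : α ≤ 1) (hβ : 1 ≤ β)
    (hupper : ∀ x y : A, dist (θ x) (θ y) ≤ c * dist x y ^ α)
    (hlower : ∀ x y : A, dist x y ^ β ≤ c * dist (θ x) (θ y)) :
    ∀ R : ℝ, 0 ≤ R → ∀ x y : A, x ≠ y →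
      (Real.exp (-R) ≤ dist x y ∨ Real.exp (-R) ≤ dist (θ x) (θ y)) →
      0 < dist (θ x) (θ y) ∧
        |Real.log (dist (θ x) (θ y) / dist x y)| ≤
          (Real.log c + max (1 - α) (β - 1) * R) / α := by
  intro R hR x y hxy hfar
  have hc0 : 0 < c := one_pos.trans_le hc
  have hlogc : 0 ≤ log c := log_nonneg hc
  have hd : 0 < dist x y := dist_pos.2 hxy
  have hD : 0 < dist (θ x) (θ y) :=
    pos_of_mul_pos_right ((rpow_pos_of_pos hd β).trans_le (hlower x y)) hc0.le
  have hup := mul_log_le_of_rpow_le_mul_rpow (p := 1) hD hd hc0 (by simpa using hupper x y)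
  have hlow := mul_log_le_of_rpow_le_mul_rpow (q := 1) hd hD hc0 (by simpa using hlower x y)
  have hfar' : -R ≤ log (dist x y) ∨ -R ≤ log (dist (θ x) (θ y)) := by
    simpa only [← le_log_iff_exp_le hd, ← le_log_iff_exp_le hD] using hfar
  refine ⟨hD, ?_⟩
  rw [log_div hD.ne' hd.ne', abs_sub_le_iff]
  constructor
  · refine (sub_le_div_of_mul_le_add_mul hα0 hα1 hlogc hR hup hfar').trans ?_
    gcongr
    exact le_max_left _ _
  · refine (sub_le_div_of_mul_le_add_mul one_pos hβ hlogc hR hlow hfar'.symm).trans ?_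
    have hβM : β - 1 ≤ max (1 - α) (β - 1) := le_max_right _ _
    gcongr

theorem stmt_14
    {A B : Type*} [MetricSpace A] [MetricSpace B]
    (hA : Metric.diam (Set.univ : Set A) ≤ 1)
    (hB : Metric.diam (Set.univ : Set B) ≤ 1)
    (θ : A → B) (c α β : ℝ) (hc : 1 ≤ c)
    (hα0 : 0 < α) (hα1 : α ≤ 1) (hβ : 1 ≤ β)
    (hupper : ∀ x y : A, dist (θ x) (θ y) ≤ c * dist x y ^ α)
    (hlower : ∀ x y : A, dist x y ^ β ≤ c * dist (θ x) (θ y)) :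
    ∀ R : ℝ, 0 ≤ R → ∀ x y : A, x ≠ y →
      (Real.exp (-R) ≤ dist x y ∨ Real.exp (-R) ≤ dist (θ x) (θ y)) →
      0 < dist (θ x) (θ y) ∧
        |Real.log (dist (θ x) (θ y) / dist x y)| ≤
          (Real.log c + max (1 - α) (β - 1) * R) / α :=
  stmt_14_general θ c α β hc hα0 hα1 hβ hupper hlower
end

section
/- Let n ≥ 1 and let μ, μ' : Fin n → ℝ satisfy μ i > 0 and μ' i > 0 for all i. Let t : Fin n → ℝ satisfy 0 < t i ≤ 1 for all i. Set D = maxᵢ (t i)^{1/μ i}, D' = maxᵢ (t i)^{1/μ' i}, and K = maxᵢ |μ i / μ' i − 1|. Then |log D' − log D| ≤ K · (−log D). In particular, if R ≥ 0 and D ≥ e^{−R}, then |log(D'/D)| ≤ K·R. -/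
/-! Writing `t i ^ (1 / μ i) = exp (a i)` with `a i = log (t i) / μ i ≤ 0`, the exponents for `μ'`
are `(μ i / μ' i) * a i`, and `μ i / μ' i` lies in `[1 - K, 1 + K]`. Since `log` commutes with the
maximum, `log D' - log D` compares the maxima of `c i * a i` and `a i` for nonpositive `a i` and
ratios `c i` within `K` of `1`, and these differ by at most `K * |max a|`. -/

open Real

section

variable {ι : Type*} [Finite ι] [Nonempty ι]

theorem log_ciSup_rpow {t s : ι → ℝ} (ht : ∀ i, 0 < t i) :
    log (⨆ i, t i ^ s i) = ⨆ i, log (t i) * s i := by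
  simp_rw [rpow_def_of_pos (ht _)]
  rw [← Monotone.map_ciSup_of_continuousAt continuous_exp.continuousAt exp_monotone
    (Finite.bddAbove_range _), log_exp]

theorem abs_ciSup_mul_sub_ciSup_le {a c : ι → ℝ} {K : ℝ} (ha : ∀ i, a i ≤ 0)
    (hc : ∀ i, 0 ≤ c i) (hK : ∀ i, |c i - 1| ≤ K) :
    |(⨆ i, c i * a i) - ⨆ i, a i| ≤ K * -⨆ i, a i := by
  obtain ⟨j, hj⟩ := Finite.exists_max a
  have hA : (⨆ i, a i) = a j := le_antisymm (ciSup_le hj) (le_ciSup (Finite.bddAbove_range a) j)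
  rw [hA]
  refine abs_le.mpr ⟨?_, ?_⟩
  · have hcj : c j ≤ 1 + K := by linarith [(abs_le.mp (hK j)).2]
    have hj_le : c j * a j ≤ ⨆ i, c i * a i :=
      le_ciSup (Finite.bddAbove_range fun i => c i * a i) j
    linarith [mul_le_mul_of_nonpos_right hcj (ha j)]
  · refine sub_le_iff_le_add'.mpr (ciSup_le fun i => ?_)
    have hci : 1 - K ≤ c i := by linarith [(abs_le.mp (hK i)).1]
    calc c i * a i ≤ c i * a j := mul_le_mul_of_nonneg_left (hj i) (hc i)
      _ ≤ (1 - K) * a j := mul_le_mul_of_nonpos_right hci (ha j)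
      _ = a j + K * -a j := by ring

end

theorem stmt_15
    (n : ℕ) (hn : 1 ≤ n) (μ μ' t : Fin n → ℝ)
    (hμ : ∀ i, 0 < μ i) (hμ' : ∀ i, 0 < μ' i)
    (ht0 : ∀ i, 0 < t i) (ht1 : ∀ i, t i ≤ 1) :
    |Real.log (⨆ i, t i ^ (1 / μ' i)) - Real.log (⨆ i, t i ^ (1 / μ i))| ≤
        (⨆ i, |μ i / μ' i - 1|) * (-Real.log (⨆ i, t i ^ (1 / μ i))) ∧
      ∀ R : ℝ, 0 ≤ R → Real.exp (-R) ≤ (⨆ i, t i ^ (1 / μ i)) →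
        |Real.log ((⨆ i, t i ^ (1 / μ' i)) / (⨆ i, t i ^ (1 / μ i)))| ≤
          (⨆ i, |μ i / μ' i - 1|) * R := by
  let i₀ : Fin n := ⟨0, hn⟩
  have : Nonempty (Fin n) := ⟨i₀⟩
  set K := ⨆ i, |μ i / μ' i - 1|
  have hK : ∀ i, |μ i / μ' i - 1| ≤ K := le_ciSup (Finite.bddAbove_range _)
  have ha : ∀ i, log (t i) * (1 / μ i) ≤ 0 := fun i =>
    mul_nonpos_of_nonpos_of_nonneg (log_nonpos (ht0 i).le (ht1 i)) (one_div_nonneg.mpr (hμ i).le)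
  have hb : ∀ i, log (t i) * (1 / μ' i) = μ i / μ' i * (log (t i) * (1 / μ i)) := fun i => by
    field_simp [(hμ i).ne', (hμ' i).ne']
  have hmain : |log (⨆ i, t i ^ (1 / μ' i)) - log (⨆ i, t i ^ (1 / μ i))| ≤
      K * -log (⨆ i, t i ^ (1 / μ i)) := by
    rw [log_ciSup_rpow ht0, log_ciSup_rpow ht0, funext hb]
    exact abs_ciSup_mul_sub_ciSup_le ha (fun i => div_nonneg (hμ i).le (hμ' i).le) hK
  refine ⟨hmain, fun R _ hRD => ?_⟩
  have hD : 0 < ⨆ i, t i ^ (1 / μ i) := (exp_pos _).trans_le hRD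
  have hD' : 0 < ⨆ i, t i ^ (1 / μ' i) :=
    (rpow_pos_of_pos (ht0 i₀) _).trans_le
      (le_ciSup (Finite.bddAbove_range fun i => t i ^ (1 / μ' i)) i₀)
  have hlogD : -log (⨆ i, t i ^ (1 / μ i)) ≤ R := neg_le.mp ((le_log_iff_exp_le hD).mpr hRD)
  rw [log_div hD'.ne' hD.ne']
  exact hmain.trans (mul_le_mul_of_nonneg_left hlogD ((abs_nonneg _).trans (hK i₀)))
end

section
/- There exists a constant C ≥ 1 such that for every real R ≥ 1 and all real numbers x, y with |x| ≤ 1 and |y| ≤ 1, if max(|x|, |y|) ≥ e^{−R} or max(|y|, |x − y·log|y||) ≥ e^{−R}, then max(|y|, |x − y·log|y||) ≤ C·R·max(|x|, |y|) and max(|x|, |y|) ≤ C·R·max(|y|, |x − y·log|y||). Here log denotes the real logarithm with the convention y·log|y| = 0 when y = 0. -/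
/-!
The shear `(x, y) ↦ (x - y log|y|, y)` moves the first coordinate by `|y log|y|| = negMulLog |y|`,
and for `|y| ≤ m ≤ 1` this is at most `m - m log m`. Hence each of the two max-norms `m`, `m'` is
at most `m (2 - log m)` in terms of the other one (when that one is `≤ 1`). The threshold
`e^{-R} ≤ max(m, m')` then gives `e^{-R} ≤ m (2 - log m)`, and taking logarithms,
`2 - log m ≤ 2R + 4 ≤ 6R`.
-/

open Real

lemma negMulLog_le_add_negMulLog {t m : ℝ} (ht : 0 ≤ t) (htm : t ≤ m) (hm : m ≤ 1) :
    negMulLog t ≤ m + negMulLog m := by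
  rcases ht.trans htm |>.eq_or_lt with rfl | hm0
  · simp [le_antisymm htm ht]
  have hratio : t / m ≤ 1 := div_le_one_of_le₀ htm hm0.le
  calc negMulLog t = negMulLog (m * (t / m)) := by rw [mul_div_cancel₀ t hm0.ne']
    _ = t / m * negMulLog m + m * negMulLog (t / m) := negMulLog_mul m (t / m)
    _ ≤ 1 * negMulLog m + m * (1 - t / m) := by
      gcongr
      · exact negMulLog_nonneg hm0.le hm
      · exact negMulLog_le_one_sub_self (by positivity)
    _ ≤ m + negMulLog m := by
      rw [mul_one_sub, mul_div_cancel₀ t hm0.ne']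
      linarith

lemma abs_mul_log_abs {y : ℝ} (hy : |y| ≤ 1) : abs (y * log |y|) = negMulLog |y| := by
  rw [abs_mul, abs_of_nonpos (log_nonpos (abs_nonneg y) hy), negMulLog]
  ring

lemma max_abs_le_of_abs_le_add_negMulLog {x x' y : ℝ} (hx' : |x'| ≤ |x| + negMulLog |y|)
    (hm : max |x| |y| ≤ 1) :
    max |x'| |y| ≤ max |x| |y| * (2 - log (max |x| |y|)) := by
  set m := max |x| |y|
  have hxm : |x| ≤ m := le_max_left _ _
  have hym : |y| ≤ m := le_max_right _ _
  have hgauge : m * (2 - log m) = 2 * m + negMulLog m := by rw [negMulLog]; ring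
  have hnegMulLog := negMulLog_le_add_negMulLog (abs_nonneg y) hym hm
  have hnonneg := negMulLog_nonneg ((abs_nonneg y).trans hym) hm
  rw [hgauge]
  exact max_le (by linarith) (by linarith [abs_nonneg y])

lemma log_le_half_self {v : ℝ} (hv : 0 < v) : log v ≤ v / 2 := by
  have hsplit : log v = log 2 + log (v / 2) := by
    rw [← log_mul two_ne_zero (by positivity), mul_div_cancel₀ v two_ne_zero]
  linarith [log_le_sub_one_of_pos (half_pos hv), log_two_lt_d9]

lemma two_sub_log_le_of_exp_neg_le {m R : ℝ} (hm0 : 0 ≤ m) (hm1 : m ≤ 1) (hR : 1 ≤ R)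
    (h : exp (-R) ≤ m * (2 - log m)) : 2 - log m ≤ 6 * R := by
  set v := 2 - log m
  have hv : 2 ≤ v := by linarith [log_nonpos hm0 hm1]
  have hm : 0 < m := by
    rcases hm0.eq_or_lt with rfl | hm
    · linarith [exp_pos (-R), zero_mul v]
    · exact hm
  have hlog : -R ≤ 2 - v + log v := by
    have := log_le_log (exp_pos _) h
    rw [log_exp, log_mul hm.ne' (by positivity)] at this
    linarith [show log m = 2 - v from (sub_sub_cancel 2 (log m)).symm]
  linarith [log_le_half_self (by positivity : 0 < v)]

lemma le_mul_of_le_mul_two_sub_log {R m m' : ℝ} (hR : 1 ≤ R) (hm0 : 0 ≤ m) (hm1 : m ≤ 1)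
    (hm' : m' ≤ m * (2 - log m)) (hexp : exp (-R) ≤ m ∨ exp (-R) ≤ m') : m' ≤ 6 * R * m := by
  have hm_le : m ≤ m * (2 - log m) :=
    le_mul_of_one_le_right hm0 (by linarith [log_nonpos hm0 hm1])
  have hexp' : exp (-R) ≤ m * (2 - log m) := by
    rcases hexp with h | h
    · exact h.trans hm_le
    · exact h.trans hm'
  calc m' ≤ m * (2 - log m) := hm'
    _ ≤ m * (6 * R) := by gcongr; exact two_sub_log_le_of_exp_neg_le hm0 hm1 hR hexp'
    _ = 6 * R * m := mul_comm _ _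

theorem stmt_16 :
    ∃ C : ℝ, 1 ≤ C ∧
      ∀ R : ℝ, 1 ≤ R → ∀ x y : ℝ, |x| ≤ 1 → |y| ≤ 1 →
        (Real.exp (-R) ≤ max |x| |y| ∨
          Real.exp (-R) ≤ max |y| (abs (x - y * Real.log |y|))) →
        max |y| (abs (x - y * Real.log |y|)) ≤ C * R * max |x| |y| ∧
          max |x| |y| ≤ C * R * max |y| (abs (x - y * Real.log |y|)) := by
  refine ⟨6, by norm_num, fun R hR x y hx hy hexp => ?_⟩
  set x' := x - y * log |y|
  have hshear : abs (y * log |y|) = negMulLog |y| := abs_mul_log_abs hy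
  have hd : max |x| |y| ≤ 1 := max_le hx hy
  have h₁ : max |y| |x'| ≤ max |x| |y| * (2 - log (max |x| |y|)) := by
    rw [max_comm]
    exact max_abs_le_of_abs_le_add_negMulLog (hshear ▸ abs_sub x _) hd
  refine ⟨le_mul_of_le_mul_two_sub_log hR (by positivity) hd h₁ hexp, ?_⟩
  by_cases hd' : max |y| |x'| ≤ 1
  · have h₂ : max |x| |y| ≤ max |y| |x'| * (2 - log (max |y| |x'|)) := by
      rw [max_comm |y|] at hd' ⊢
      refine max_abs_le_of_abs_le_add_negMulLog ?_ hd'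
      linarith [abs_sub_abs_le_abs_sub x (y * log |y|)]
    exact le_mul_of_le_mul_two_sub_log hR (by positivity) hd' h₂ hexp.symm
  · calc max |x| |y| ≤ max |y| |x'| := hd.trans (le_of_not_ge hd')
      _ ≤ 6 * R * max |y| |x'| := le_mul_of_one_le_left (by positivity) (by linarith)
end
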